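/- arXiv:1011.3183 — 4 statements merged into one kernel-verified Lean document; each statement's English description precedes it below -/
import Mathlib

section
/- Let n ≥ 0 be an integer, let k be an integer with 0 ≤ k < 2^n, set x₀ = k/2^n, and let D = n − 2s where s is the sum of the binary digits of k. Then for every w with 0 ≤ w ≤ 1, τ(x₀ + w/2^n) = τ(x₀) + 2^{-n}·(τ(w) + D·w). That is, on the dyadic interval [k/2^n, (k+1)/2^n] the graph of τ is a miniature copy of the full graph, vertically shifted by τ(x₀), shrunk by the factor 2^{-n}, and tilted by the linear term 2^{-n}·D·w. -/
open MeasureTheory Set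

/-- Distance from a real number to the nearest integer. -/
noncomputable def distNearestInt (t : ℝ) : ℝ := |t - round t|

/-- The Takagi function. -/
noncomputable def takagi (x : ℝ) : ℝ := ∑' n : ℕ, distNearestInt (2 ^ n * x) / 2 ^ n

/-- The `j`-th binary digit of `x ∈ [0,1)` (binary expansion terminating in `0^∞`). -/
noncomputable def bdigit (x : ℝ) (j : ℕ) : ℤ := ⌊(2 : ℝ) ^ j * x⌋ - 2 * ⌊(2 : ℝ) ^ (j - 1) * x⌋

/-- The deficient digit function `D_j(x) = j - 2(b_1(x) + ⋯ + b_j(x))`. -/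
noncomputable def defDigit (x : ℝ) (j : ℕ) : ℤ := (j : ℤ) - 2 * ∑ i ∈ Finset.Icc 1 j, bdigit x i

/-- The deficient digit set `Ω^L`. -/
noncomputable def OmegaL : Set ℝ := {x | x ∈ Set.Ico (0 : ℝ) 1 ∧ ∀ j : ℕ, 1 ≤ j → 0 ≤ defDigit x j}

/-- The set `½Ω^L = {x ∈ [0,1) : D_j(x) > 0 for all j ≥ 1}`. -/
noncomputable def halfOmegaL : Set ℝ :=
  {x | x ∈ Set.Ico (0 : ℝ) 1 ∧ ∀ j : ℕ, 1 ≤ j → 0 < defDigit x j}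

/-- The Takagi singular function. -/
noncomputable def takagiS (x : ℝ) : ℝ := sSup {y | ∃ t ∈ OmegaL, t ≤ x ∧ y = takagi t + t}

/-- `Ω^L_∞`: points of `Ω^L` with infinitely many balance points. -/
noncomputable def OmegaLinf : Set ℝ :=
  {x ∈ OmegaL | {j : ℕ | 1 ≤ j ∧ defDigit x j = 0}.Infinite}

/-- `Ω^L_fin = Ω^L \ Ω^L_∞`. -/
noncomputable def OmegaLfin : Set ℝ := OmegaL \ OmegaLinf

/-- `(m, k)` encodes a member `k / 2^(2m)` of the breakpoint set `ℬ'`. -/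
noncomputable def breakpoint (m k : ℕ) : Prop :=
  (m = 0 ∧ k = 0) ∨
    (1 ≤ m ∧ 0 < k ∧ k < 2 ^ (2 * m) ∧
      (∀ j : ℕ, 1 ≤ j → j ≤ 2 * m - 1 → 0 ≤ defDigit ((k : ℝ) / 2 ^ (2 * m)) j) ∧
      defDigit ((k : ℝ) / 2 ^ (2 * m)) (2 * m) = 0)

/-- The fine partition set `Ω^L(B)` for `B = k / 2^(2m)`. -/
noncomputable def fineSet (m k : ℕ) : Set ℝ :=
  {x | ∃ x' ∈ halfOmegaL, x = (k : ℝ) / 2 ^ (2 * m) + x' / 2 ^ (2 * m)}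

/-- The set `Γ_{2r}`. -/
noncomputable def Gamma (r : ℕ) : Set ℝ :=
  {x | x ∈ Set.Ico (0 : ℝ) 1 ∧ ∀ j : ℕ, 1 ≤ j →
    ((¬ (2 * r ∣ j) → 0 < defDigit x j) ∧ ((2 * r) ∣ j → defDigit x j = 0))}

/-- The level set `L(y)` of the Takagi function. -/
noncomputable def levelSet (y : ℝ) : Set ℝ := {x ∈ Set.Icc (0 : ℝ) 1 | takagi x = y}

lemma distNearestInt_add_int (t : ℝ) (m : ℤ) : distNearestInt (t + m) = distNearestInt t := by
  unfold distNearestInt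
  rw [round_add_intCast]
  push_cast
  ring_nf

lemma takagi_summable (x : ℝ) :
    Summable (fun n : ℕ => distNearestInt (2 ^ n * x) / 2 ^ n) := by
  apply Summable.of_nonneg_of_le
    (fun n => div_nonneg (abs_nonneg _) (by positivity)) (fun n => ?_)
    (summable_geometric_of_lt_one (r := 1/2) (by norm_num) (by norm_num))
  rw [div_pow, one_pow]
  gcongr
  exact (abs_sub_round _).trans (by norm_num)

lemma takagi_rec (x : ℝ) : takagi x = distNearestInt x + takagi (2 * x) / 2 := by
  unfold takagi
  rw [Summable.tsum_eq_zero_add (takagi_summable x)]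
  have h : ∀ n : ℕ, distNearestInt (2 ^ (n+1) * x) / 2 ^ (n+1)
      = (distNearestInt (2 ^ n * (2 * x)) / 2 ^ n) / 2 := by
    intro n
    rw [show (2:ℝ) ^ (n+1) * x = 2 ^ n * (2 * x) by ring, show (2:ℝ) ^ (n+1) = 2^n * 2 by ring]
    ring
  simp only [h, pow_zero, one_mul, div_one, tsum_div_const]

lemma takagi_add_one (x : ℝ) : takagi (x + 1) = takagi x := by
  unfold takagi
  apply tsum_congr
  intro n
  rw [show (2:ℝ)^n * (x+1) = 2^n * x + ((2^n : ℤ) : ℝ) by push_cast; ring,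
    distNearestInt_add_int]

lemma takagi_zero : takagi 0 = 0 := by
  unfold takagi
  have : ∀ n : ℕ, distNearestInt (2 ^ n * (0:ℝ)) / 2 ^ n = 0 := by
    intro n
    simp [distNearestInt]
  simp only [this, tsum_zero]

lemma takagi_one : takagi 1 = 0 := by
  have := takagi_add_one 0
  simpa [takagi_zero] using this

lemma d_left {t : ℝ} (h0 : 0 ≤ t) (h1 : t ≤ 1/2) : distNearestInt t = t := by
  rcases lt_or_eq_of_le h1 with h | h
  · have hr : round t = 0 := by
      rw [round_eq]
      apply Int.floor_eq_zero_iff.mpr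
      constructor
      · simp; linarith
      · simp; linarith
    simp [distNearestInt, hr, abs_of_nonneg h0]
  · subst h
    have hr : round ((1:ℝ)/2) = 1 := by
      rw [round_eq, show (1:ℝ)/2 + 1/2 = 1 by norm_num]
      exact_mod_cast Int.floor_one
    rw [distNearestInt, hr]
    norm_num

lemma d_right {t : ℝ} (h0 : 1/2 ≤ t) (h1 : t ≤ 1) : distNearestInt t = 1 - t := by
  have hr : round t = 1 := by
    rw [round_eq, Int.floor_eq_iff]
    constructor
    · push_cast; linarith
    · push_cast; linarith
  rw [distNearestInt, hr]
  push_cast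
  rw [abs_of_nonpos (by linarith)]
  ring

lemma takagi_half {w : ℝ} (h0 : 0 ≤ w) (h1 : w ≤ 1) :
    takagi (w / 2) = w / 2 + takagi w / 2 := by
  rw [takagi_rec (w/2), d_left (by linarith) (by linarith),
    show 2 * (w/2) = w by ring]

lemma takagi_half' {w : ℝ} (h0 : 0 ≤ w) (h1 : w ≤ 1) :
    takagi ((1 + w) / 2) = (1 - w) / 2 + takagi w / 2 := by
  rw [takagi_rec ((1+w)/2), d_right (by linarith) (by linarith),
    show 2 * ((1+w)/2) = w + 1 by ring, takagi_add_one]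
  ring

lemma takagi_key : ∀ n k : ℕ, k < 2 ^ n → ∀ w : ℝ, 0 ≤ w → w ≤ 1 →
    takagi (((k:ℝ) + w) / 2 ^ n) =
      takagi ((k:ℝ) / 2 ^ n) +
        (takagi w + ((n:ℝ) - 2 * ((Nat.digits 2 k).sum : ℝ)) * w) / 2 ^ n := by
  intro n
  induction n with
  | zero =>
    intro k hk w hw0 hw1
    interval_cases k
    simp [takagi_zero]
  | succ n ih =>
    intro k hk w hw0 hw1
    set q := k / 2 with hq
    set b := k % 2 with hb
    have hkqb : k = 2 * q + b := (Nat.div_add_mod k 2).symm.trans (by ring)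
    have hblt : b < 2 := Nat.mod_lt _ (by norm_num)
    have hqlt : q < 2 ^ n := by
      rcases Nat.lt_or_ge q (2^n) with h | h
      · exact h
      · exfalso
        have : 2 ^ (n+1) ≤ k := by
          calc 2 ^ (n+1) = 2 * 2^n := by ring
            _ ≤ 2 * q := by omega
            _ ≤ k := by omega
        omega
    have hsum : ((Nat.digits 2 k).sum : ℝ) = (b : ℝ) + ((Nat.digits 2 q).sum : ℝ) := by
      rcases Nat.eq_zero_or_pos k with h0 | h0
      · have hq0 : q = 0 := by omega
        have hb0 : b = 0 := by omega
        rw [h0, hq0, hb0]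
        simp
      · rw [Nat.digits_def' (by norm_num : 1 < 2) h0, List.sum_cons, ← hb, ← hq,
          Nat.cast_add]
    have e1 : ((k:ℝ) + w) / 2 ^ (n+1) = ((q:ℝ) + ((b:ℝ) + w)/2) / 2 ^ n := by
      rw [hkqb]
      push_cast
      field_simp
      ring
    have e2 : ((k:ℝ)) / 2 ^ (n+1) = ((q:ℝ) + ((b:ℝ) + 0)/2) / 2 ^ n := by
      rw [hkqb]
      push_cast
      field_simp
      ring
    have hble : (b:ℝ) ≤ 1 := by exact_mod_cast Nat.lt_succ_iff.mp hblt
    have hb0 : (0:ℝ) ≤ ((b:ℝ) + w)/2 := by positivity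
    have hb1 : ((b:ℝ) + w)/2 ≤ 1 := by linarith
    have hb0' : (0:ℝ) ≤ ((b:ℝ) + 0)/2 := by positivity
    have hb1' : ((b:ℝ) + 0)/2 ≤ 1 := by linarith
    rw [e1, e2, ih q hqlt _ hb0 hb1, ih q hqlt _ hb0' hb1', hsum]
    interval_cases b
    · simp only [Nat.cast_zero, zero_add, add_zero]
      rw [show (0:ℝ)/2 = 0/2 by ring, takagi_half hw0 hw1,
        show (0:ℝ)/2 = 0 by ring, takagi_zero]
      push_cast
      field_simp
      ring
    · simp only [Nat.cast_one]
      rw [show ((1:ℝ) + 0)/2 = 1/2 by ring]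
      have h12 : takagi ((1:ℝ)/2) = 1/2 := by
        have := takagi_half (w := 1) (by norm_num) (by norm_num)
        simpa [takagi_one] using this
      rw [takagi_half' hw0 hw1, h12]
      push_cast
      field_simp
      ring

/-- Takagi self-similarity on dyadic intervals. -/
theorem takagi_local_self_similarity (n k : ℕ) (hk : k < 2 ^ n) (w : ℝ)
    (hw0 : 0 ≤ w) (hw1 : w ≤ 1) :
    takagi ((k : ℝ) / 2 ^ n + w / 2 ^ n) =
      takagi ((k : ℝ) / 2 ^ n) +
        (takagi w + (((n : ℤ) - 2 * ((Nat.digits 2 k).sum : ℤ) : ℤ) : ℝ) * w) / 2 ^ n := by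
  rw [← add_div, takagi_key n k hk w hw0 hw1,
    show (((((n : ℤ) - 2 * ((Nat.digits 2 k).sum : ℤ)) : ℤ)) : ℝ)
      = (n:ℝ) - 2 * ((Nat.digits 2 k).sum : ℝ) by norm_cast]
end

section
/- The Takagi function τ is nondecreasing on the set ½Ω^L: if x₁, x₂ ∈ ½Ω^L and x₁ ≤ x₂, then τ(x₁) ≤ τ(x₂). -/
open MeasureTheory Set

section TakagiAux

open Finset Filter

/- ### Basic facts about `distNearestInt` -/

lemma dni_eq_min (t : ℝ) : distNearestInt t = min (Int.fract t) (1 - Int.fract t) :=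
  abs_sub_round_eq_min t

lemma dni_nonneg (t : ℝ) : 0 ≤ distNearestInt t := abs_nonneg _

lemma dni_le_half (t : ℝ) : distNearestInt t ≤ 1 / 2 := abs_sub_round t

lemma dni_intCast (k : ℤ) : distNearestInt (k : ℝ) = 0 := by
  simp [distNearestInt]

lemma dni_le_abs_sub (t : ℝ) (m : ℤ) : distNearestInt t ≤ |t - m| := by
  rcases eq_or_ne m (round t) with rfl | h
  · exact le_of_eq rfl
  · have h1 : (1 : ℝ) ≤ |(round t : ℝ) - m| := by
      have : round t - m ≠ 0 := sub_ne_zero.2 (Ne.symm h)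
      exact_mod_cast Int.one_le_abs (by exact_mod_cast this)
    have h2 : |t - round t| ≤ 1 / 2 := abs_sub_round t
    have h3 : |(round t : ℝ) - m| ≤ |(round t : ℝ) - t| + |t - m| := abs_sub_le _ _ _
    have h4 : |(round t : ℝ) - t| = |t - round t| := abs_sub_comm _ _
    calc distNearestInt t = |t - round t| := rfl
      _ ≤ |t - (m : ℝ)| := by rw [h4] at h3; linarith

lemma dni_lip (s t : ℝ) : |distNearestInt s - distNearestInt t| ≤ |s - t| := by
  have h1 : distNearestInt s ≤ |s - t| + distNearestInt t := by
    calc distNearestInt s ≤ |s - (round t : ℝ)| := dni_le_abs_sub s (round t)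
      _ ≤ |s - t| + |t - round t| := abs_sub_le _ _ _
      _ = |s - t| + distNearestInt t := rfl
  have h2 : distNearestInt t ≤ |t - s| + distNearestInt s := by
    calc distNearestInt t ≤ |t - (round s : ℝ)| := dni_le_abs_sub t (round s)
      _ ≤ |t - s| + |s - round s| := abs_sub_le _ _ _
      _ = |t - s| + distNearestInt s := rfl
  rw [abs_sub_le_iff]
  constructor
  · linarith
  · rw [abs_sub_comm] at h2; linarith

lemma dni_continuous : Continuous distNearestInt := by
  have : LipschitzWith 1 distNearestInt := by
    apply LipschitzWith.of_dist_le_mul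
    intro s t
    rw [Real.dist_eq, Real.dist_eq, NNReal.coe_one, one_mul]
    exact dni_lip s t
  exact this.continuous

lemma takagi_continuous : Continuous takagi := by
  apply continuous_tsum (u := fun n : ℕ => (1 / 2 : ℝ) ^ n)
  · intro n
    exact (dni_continuous.comp (continuous_const.mul continuous_id)).div_const _
  · exact summable_geometric_of_lt_one (by norm_num) (by norm_num)
  · intro n x
    have h2 : (0 : ℝ) < 2 ^ n := by positivity
    rw [Real.norm_eq_abs, abs_div, abs_of_pos h2, abs_of_nonneg (dni_nonneg _)]
    rw [div_pow, one_pow]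
    rw [div_le_div_iff₀ h2 h2]
    have := dni_le_half (2 ^ n * x)
    nlinarith

/- ### Takagi function at dyadic rationals -/

lemma takagi_dyadic (k : ℤ) (N : ℕ) :
    takagi ((k : ℝ) / 2 ^ N) =
      ∑ n ∈ range N, distNearestInt (2 ^ n * ((k : ℝ) / 2 ^ N)) / 2 ^ n := by
  apply tsum_eq_sum
  intro n hn
  rw [Finset.mem_range, not_lt] at hn
  have h2N : (2 : ℝ) ^ N ≠ 0 := by positivity
  have hpow : (2 : ℝ) ^ n = 2 ^ N * 2 ^ (n - N) := by
    rw [← pow_add, Nat.add_sub_cancel' hn]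
  have : (2 : ℝ) ^ n * ((k : ℝ) / 2 ^ N) = ((k * 2 ^ (n - N) : ℤ) : ℝ) := by
    push_cast
    rw [hpow]
    field_simp
  rw [this, dni_intCast, zero_div]

/- ### Binary digit basics -/

lemma floor_two_mul_eq (t : ℝ) : ⌊2 * t⌋ = 2 * ⌊t⌋ + ⌊2 * Int.fract t⌋ := by
  conv_lhs => rw [show t = (⌊t⌋ : ℝ) + Int.fract t from (Int.floor_add_fract t).symm]
  rw [mul_add, show (2 : ℝ) * (⌊t⌋ : ℝ) = ((2 * ⌊t⌋ : ℤ) : ℝ) by push_cast; ring,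
    Int.floor_intCast_add]

lemma bit_cases (t : ℝ) : ⌊2 * t⌋ - 2 * ⌊t⌋ = 0 ∨ ⌊2 * t⌋ - 2 * ⌊t⌋ = 1 := by
  rw [floor_two_mul_eq]
  have h0 : (0 : ℝ) ≤ 2 * Int.fract t := by
    have := Int.fract_nonneg t; linarith
  have h1 : 2 * Int.fract t < 2 := by
    have := Int.fract_lt_one t; linarith
  have hl : (0 : ℤ) ≤ ⌊2 * Int.fract t⌋ := Int.floor_nonneg.2 h0
  have hu : ⌊2 * Int.fract t⌋ < 2 := by
    apply Int.floor_lt.2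
    push_cast
    linarith
  omega

lemma bit_eq_zero_iff (t : ℝ) : ⌊2 * t⌋ - 2 * ⌊t⌋ = 0 ↔ Int.fract t < 1 / 2 := by
  rw [floor_two_mul_eq]
  have h0 := Int.fract_nonneg t
  have h1 := Int.fract_lt_one t
  constructor
  · intro h
    have hz : ⌊2 * Int.fract t⌋ = 0 := by omega
    have := (Int.floor_eq_zero_iff.1 hz).2
    linarith
  · intro h
    have : ⌊2 * Int.fract t⌋ = 0 := by
      rw [Int.floor_eq_zero_iff]
      exact Set.mem_Ico.2 ⟨by linarith, by linarith⟩
    omega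

lemma bdigit_succ (x : ℝ) (n : ℕ) :
    bdigit x (n + 1) = ⌊(2 : ℝ) ^ (n + 1) * x⌋ - 2 * ⌊(2 : ℝ) ^ n * x⌋ := by
  simp [bdigit]

lemma bdigit_cases (x : ℝ) (n : ℕ) : bdigit x (n + 1) = 0 ∨ bdigit x (n + 1) = 1 := by
  rw [bdigit_succ]
  have h : (2 : ℝ) ^ (n + 1) * x = 2 * (2 ^ n * x) := by ring
  rw [h]
  exact bit_cases _

lemma defDigit_zero (x : ℝ) : defDigit x 0 = 0 := by
  simp [defDigit]

lemma defDigit_succ (x : ℝ) (n : ℕ) :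
    defDigit x (n + 1) = defDigit x n + 1 - 2 * bdigit x (n + 1) := by
  unfold defDigit
  rw [← Finset.Ico_add_one_right_eq_Icc, ← Finset.Ico_add_one_right_eq_Icc, Finset.sum_Ico_succ_top (by omega)]
  push_cast
  ring

lemma defDigit_eq_sum (x : ℝ) (N : ℕ) :
    defDigit x N = ∑ n ∈ range N, (1 - 2 * bdigit x (n + 1)) := by
  induction N with
  | zero => simp [defDigit_zero]
  | succ n ih => rw [Finset.sum_range_succ, ← ih, defDigit_succ]; ring

/- ### The key perturbation step -/

lemma dni_step (K : ℤ) (M : ℕ) (b : ℤ)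
    (hb : b = ⌊2 * ((K : ℝ) / 2 ^ M)⌋ - 2 * ⌊(K : ℝ) / 2 ^ M⌋) :
    distNearestInt ((K : ℝ) / 2 ^ M + 1 / 2 ^ (M + 1)) =
      distNearestInt ((K : ℝ) / 2 ^ M) + (1 - 2 * (b : ℝ)) / 2 ^ (M + 1) := by
  set s : ℝ := (K : ℝ) / 2 ^ M with hs
  have hM : (0 : ℝ) < 2 ^ M := by positivity
  have hM1 : (0 : ℝ) < 2 ^ (M + 1) := by positivity
  have hf0 : 0 ≤ Int.fract s := Int.fract_nonneg s
  have hf1 : Int.fract s < 1 := Int.fract_lt_one s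
  have hfd : Int.fract s = s - (⌊s⌋ : ℝ) := rfl
  have hfrJ : Int.fract s = ((K - 2 ^ M * ⌊s⌋ : ℤ) : ℝ) / 2 ^ M := by
    rw [hfd, hs]
    push_cast
    field_simp
  set J : ℤ := K - 2 ^ M * ⌊s⌋ with hJ
  have hbb : b = ⌊2 * Int.fract s⌋ := by
    rw [hb, floor_two_mul_eq s]; omega
  have hsum : s + 1 / 2 ^ (M + 1) = (⌊s⌋ : ℝ) + (Int.fract s + 1 / 2 ^ (M + 1)) := by
    rw [hfd]; ring
  rcases lt_or_ge (Int.fract s) (1 / 2) with hlt | hge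
  · -- digit 0 case
    have hb0 : b = 0 := by
      rw [hbb, Int.floor_eq_zero_iff]
      exact Set.mem_Ico.2 ⟨by linarith, by linarith⟩
    have h2J : (2 * (J : ℝ)) < 2 ^ M := by
      rw [hfrJ, div_lt_iff₀ hM] at hlt
      push_cast at hlt
      linarith
    have h2JZ : 2 * J < 2 ^ M := by exact_mod_cast h2J
    have h2J1R : ((2 * J + 1 : ℤ) : ℝ) ≤ ((2 : ℤ) ^ M : ℝ) := by
      exact_mod_cast (by omega : 2 * J + 1 ≤ 2 ^ M)
    have hkey : Int.fract s + 1 / 2 ^ (M + 1) ≤ 1 / 2 := by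
      rw [hfrJ]
      push_cast at h2J1R
      have hpow : (2 : ℝ) ^ (M + 1) = 2 * 2 ^ M := by ring
      rw [div_add_div _ _ (ne_of_gt hM) (ne_of_gt hM1), div_le_div_iff₀ (by positivity) (by norm_num : (0:ℝ) < 2), hpow]
      push_cast
      nlinarith
    have hfr2 : Int.fract (s + 1 / 2 ^ (M + 1)) = Int.fract s + 1 / 2 ^ (M + 1) := by
      rw [hsum, Int.fract_intCast_add, Int.fract_eq_self.2 ⟨by positivity, by linarith⟩]
    rw [dni_eq_min, dni_eq_min, hfr2, hb0]
    rw [min_eq_left (by linarith), min_eq_left (by linarith)]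
    push_cast; ring
  · -- digit 1 case
    have hb1 : b = 1 := by
      rw [hbb]
      rw [Int.floor_eq_iff]
      push_cast
      constructor <;> linarith
    have hJlt : (J : ℝ) < 2 ^ M := by
      rw [hfrJ, div_lt_one hM] at hf1
      push_cast at hf1
      linarith
    have hJltZ : J < 2 ^ M := by exact_mod_cast hJlt
    have hJleR : ((J : ℤ) : ℝ) ≤ ((2 : ℤ) ^ M : ℝ) - 1 := by
      exact_mod_cast (by omega : J ≤ 2 ^ M - 1)
    have hfle : Int.fract s ≤ 1 - 1 / 2 ^ M := by
      rw [hfrJ]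
      push_cast at hJleR
      rw [div_le_iff₀ hM]
      push_cast
      nlinarith [one_div_mul_cancel (ne_of_gt hM)]
    have hhalf : (1 : ℝ) / 2 ^ (M + 1) < 1 / 2 ^ M := by
      apply one_div_lt_one_div_of_lt hM
      rw [pow_succ]
      nlinarith
    have hkey : Int.fract s + 1 / 2 ^ (M + 1) < 1 := by linarith
    have hfr2 : Int.fract (s + 1 / 2 ^ (M + 1)) = Int.fract s + 1 / 2 ^ (M + 1) := by
      rw [hsum, Int.fract_intCast_add, Int.fract_eq_self.2 ⟨by positivity, hkey⟩]
    have hd : (0:ℝ) < 1 / 2 ^ (M + 1) := by positivity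
    rw [dni_eq_min, dni_eq_min, hfr2, hb1]
    rw [min_eq_right (by linarith), min_eq_right (by linarith)]
    push_cast; ring

/- ### Floors of truncations -/

lemma floor_trunc (x : ℝ) {n N : ℕ} (h : n ≤ N) :
    ⌊(2 : ℝ) ^ n * ((⌊(2 : ℝ) ^ N * x⌋ : ℝ) / 2 ^ N)⌋ = ⌊(2 : ℝ) ^ n * x⌋ := by
  have hN : (0 : ℝ) < 2 ^ N := by positivity
  have hn : (0 : ℝ) < 2 ^ n := by positivity
  have hpow : (2 : ℝ) ^ N = 2 ^ (N - n) * 2 ^ n := by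
    rw [← pow_add, Nat.sub_add_cancel h]
  have hZ : (2 ^ (N - n) * ⌊(2:ℝ) ^ n * x⌋ : ℤ) ≤ ⌊(2:ℝ) ^ N * x⌋ := by
    apply Int.le_floor.2
    push_cast
    rw [hpow, mul_assoc]
    have := Int.floor_le ((2:ℝ) ^ n * x)
    have hc : (0:ℝ) ≤ 2 ^ (N - n) := by positivity
    nlinarith
  have hZR : ((2:ℝ) ^ (N - n) * (⌊(2:ℝ) ^ n * x⌋ : ℝ)) ≤ (⌊(2:ℝ) ^ N * x⌋ : ℝ) := by
    exact_mod_cast hZ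
  have h1 : ((⌊(2:ℝ) ^ n * x⌋ : ℝ)) ≤ 2 ^ n * ((⌊(2:ℝ) ^ N * x⌋ : ℝ) / 2 ^ N) := by
    rw [← mul_div_assoc, le_div_iff₀ hN]
    calc (⌊(2:ℝ)^n * x⌋ : ℝ) * 2 ^ N = (2 ^ (N - n) * (⌊(2:ℝ)^n * x⌋ : ℝ)) * 2 ^ n := by
          rw [hpow]; ring
      _ ≤ (⌊(2:ℝ) ^ N * x⌋ : ℝ) * 2 ^ n := by
          exact mul_le_mul_of_nonneg_right hZR (le_of_lt hn)
      _ = 2 ^ n * (⌊(2:ℝ) ^ N * x⌋ : ℝ) := by ring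
  have h2 : 2 ^ n * ((⌊(2:ℝ) ^ N * x⌋ : ℝ) / 2 ^ N) ≤ 2 ^ n * x := by
    have := Int.floor_le ((2:ℝ) ^ N * x)
    rw [← mul_div_assoc, div_le_iff₀ hN]
    nlinarith
  have h3 : 2 ^ n * x < (⌊(2:ℝ) ^ n * x⌋ : ℝ) + 1 := Int.lt_floor_add_one _
  rw [Int.floor_eq_iff]
  refine ⟨h1, by push_cast; linarith⟩

/- ### Takagi recursion on truncations -/

lemma takagi_trunc_succ (x : ℝ) (N : ℕ) :
    takagi ((⌊(2:ℝ) ^ (N + 1) * x⌋ : ℝ) / 2 ^ (N + 1)) =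
      takagi ((⌊(2:ℝ) ^ N * x⌋ : ℝ) / 2 ^ N)
        + (bdigit x (N + 1) : ℝ) / 2 ^ (N + 1) * ((defDigit x N : ℝ) + 1) := by
  have hb := bdigit_succ x N
  rcases bdigit_cases x N with h0 | h1
  · -- digit 0 : truncations coincide
    have hfl : ⌊(2:ℝ) ^ (N + 1) * x⌋ = 2 * ⌊(2:ℝ) ^ N * x⌋ := by omega
    have : ((⌊(2:ℝ) ^ (N + 1) * x⌋ : ℝ)) / 2 ^ (N + 1) = (⌊(2:ℝ) ^ N * x⌋ : ℝ) / 2 ^ N := by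
      rw [hfl]
      push_cast
      rw [pow_succ]
      field_simp
    rw [this, h0]
    push_cast
    ring
  · -- digit 1
    set K : ℤ := ⌊(2:ℝ) ^ N * x⌋ with hK
    have hfl : ⌊(2:ℝ) ^ (N + 1) * x⌋ = 2 * K + 1 := by omega
    have h2N : (0:ℝ) < 2 ^ N := by positivity
    have h2N1 : (0:ℝ) < 2 ^ (N+1) := by positivity
    have hsplit : ((⌊(2:ℝ) ^ (N + 1) * x⌋ : ℝ)) / 2 ^ (N + 1)
        = ((2 * K + 1 : ℤ) : ℝ) / 2 ^ (N + 1) := by rw [hfl]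
    rw [hsplit, takagi_dyadic (2 * K + 1) (N + 1), takagi_dyadic K N]
    -- extend the second sum to range (N+1)
    have hext : ∑ n ∈ range N, distNearestInt (2 ^ n * ((K : ℝ) / 2 ^ N)) / 2 ^ n
        = ∑ n ∈ range (N + 1), distNearestInt (2 ^ n * ((K : ℝ) / 2 ^ N)) / 2 ^ n := by
      rw [Finset.sum_range_succ]
      have : (2:ℝ) ^ N * ((K : ℝ) / 2 ^ N) = (K : ℝ) := by field_simp
      rw [this, dni_intCast, zero_div, add_zero]
    rw [hext]
    have key : ∀ n ∈ range (N + 1),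
        distNearestInt (2 ^ n * (((2 * K + 1 : ℤ) : ℝ) / 2 ^ (N + 1))) / 2 ^ n
          = distNearestInt (2 ^ n * ((K : ℝ) / 2 ^ N)) / 2 ^ n
            + (1 - 2 * ((if n < N then bdigit x (n + 1) else 0 : ℤ) : ℝ)) / 2 ^ (N + 1) := by
      intro n hn
      rw [Finset.mem_range] at hn
      have hnN : n ≤ N := by omega
      set M : ℕ := N - n with hM
      have hMn : M + n = N := by omega
      have hpowN : (2:ℝ) ^ N = 2 ^ M * 2 ^ n := by rw [← pow_add, hMn]
      have hpowN1 : (2:ℝ) ^ (N + 1) = 2 ^ (M + 1) * 2 ^ n := by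
        rw [← pow_add]; congr 1; omega
      have h2n : (0:ℝ) < 2 ^ n := by positivity
      have h2M : (0:ℝ) < 2 ^ M := by positivity
      have h2M1 : (0:ℝ) < 2 ^ (M+1) := by positivity
      have e1 : (2:ℝ) ^ n * (((2 * K + 1 : ℤ) : ℝ) / 2 ^ (N + 1))
          = (K : ℝ) / 2 ^ M + 1 / 2 ^ (M + 1) := by
        push_cast
        rw [hpowN1]
        field_simp
        ring
      have e2 : (2:ℝ) ^ n * ((K : ℝ) / 2 ^ N) = (K : ℝ) / 2 ^ M := by
        rw [hpowN]
        field_simp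
      have hbn : (if n < N then bdigit x (n + 1) else 0 : ℤ)
          = ⌊2 * ((K : ℝ) / 2 ^ M)⌋ - 2 * ⌊(K : ℝ) / 2 ^ M⌋ := by
        rw [← e2]
        have efl1 : ⌊(2:ℝ) ^ n * ((K : ℝ) / 2 ^ N)⌋ = ⌊(2:ℝ) ^ n * x⌋ := floor_trunc x hnN
        by_cases hcase : n < N
        · have hn1N : n + 1 ≤ N := hcase
          have e3 : 2 * ((2:ℝ) ^ n * ((K : ℝ) / 2 ^ N)) = (2:ℝ) ^ (n+1) * ((K : ℝ) / 2 ^ N) := by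
            ring
          have efl2 : ⌊(2:ℝ) ^ (n+1) * ((K : ℝ) / 2 ^ N)⌋ = ⌊(2:ℝ) ^ (n+1) * x⌋ :=
            floor_trunc x hn1N
          rw [if_pos hcase, bdigit_succ, e3, efl2, efl1]
        · have hnN' : n = N := by omega
          rw [if_neg hcase]
          subst hnN'
          have e4 : (2:ℝ) ^ n * ((K : ℝ) / 2 ^ n) = (K : ℝ) := by field_simp
          rw [e4]
          have : (2:ℝ) * (K:ℝ) = ((2 * K : ℤ) : ℝ) := by push_cast; ring
          rw [this, Int.floor_intCast, Int.floor_intCast]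
          ring
      rw [e1, e2, dni_step K M _ hbn]
      rw [add_div, hpowN1]
      congr 1
      rw [div_div]
    rw [Finset.sum_congr rfl key, Finset.sum_add_distrib]
    congr 1
    rw [Finset.sum_range_succ, if_neg (lt_irrefl N)]
    have : ∑ n ∈ range N, (1 - 2 * ((if n < N then bdigit x (n + 1) else 0 : ℤ) : ℝ)) / 2 ^ (N + 1)
        = ∑ n ∈ range N, (1 - 2 * ((bdigit x (n + 1) : ℤ) : ℝ)) / 2 ^ (N + 1) := by
      apply Finset.sum_congr rfl
      intro n hn
      rw [Finset.mem_range] at hn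
      rw [if_pos hn]
    rw [this]
    rw [← Finset.sum_div]
    have hsum : ∑ n ∈ range N, (1 - 2 * ((bdigit x (n + 1) : ℤ) : ℝ))
        = ((defDigit x N : ℤ) : ℝ) := by
      rw [defDigit_eq_sum]
      push_cast
      ring
    rw [hsum, h1]
    push_cast
    ring

lemma takagi_trunc (x : ℝ) (N : ℕ) :
    takagi ((⌊(2:ℝ) ^ N * x⌋ : ℝ) / 2 ^ N) =
      ∑ j ∈ range N, (bdigit x (j + 1) : ℝ) / 2 ^ (j + 1) * ((defDigit x j : ℝ) + 1) := by
  induction N with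
  | zero =>
      rw [Finset.range_zero, Finset.sum_empty]
      have h0 := takagi_dyadic ⌊(2:ℝ) ^ 0 * x⌋ 0
      rw [Finset.range_zero, Finset.sum_empty] at h0
      exact h0
  | succ n ih => rw [takagi_trunc_succ, ih, Finset.sum_range_succ]

/- ### Supermartingale bound -/

lemma mart_aux (b : ℕ → ℤ) (S : ℕ → ℤ) (hb : ∀ j, b j = 0 ∨ b j = 1)
    (hS : ∀ j, S (j + 1) = S j + 1 - 2 * b (j + 1)) (hS1 : ∀ j, 1 ≤ S j) (K : ℕ) :
    ∑ i ∈ range K, (b (i + 1) : ℝ) / 2 ^ (i + 1) * ((S i : ℝ) + 1) + (S K : ℝ) / 2 ^ K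
      ≤ (S 0 : ℝ) := by
  induction K with
  | zero => simp
  | succ K ih =>
    rw [Finset.sum_range_succ]
    have h2K : (0:ℝ) < 2 ^ K := by positivity
    have h2K1 : (0:ℝ) < 2 ^ (K+1) := by positivity
    have hrec : ((S (K+1) : ℝ)) = (S K : ℝ) + 1 - 2 * (b (K+1) : ℝ) := by
      exact_mod_cast congrArg (Int.cast : ℤ → ℝ) (hS K)
    have hSK : (1:ℝ) ≤ (S K : ℝ) := by exact_mod_cast hS1 K
    have hstep : (b (K + 1) : ℝ) / 2 ^ (K + 1) * ((S K : ℝ) + 1) + (S (K+1) : ℝ) / 2 ^ (K+1)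
        ≤ (S K : ℝ) / 2 ^ K := by
      rw [hrec]
      have hpow : (2:ℝ) ^ (K+1) = 2 * 2 ^ K := by ring
      have hpos : (0:ℝ) < 2 * 2 ^ K := by positivity
      rcases hb (K + 1) with h | h <;> rw [h] <;> push_cast <;> rw [hpow]
      · rw [zero_div, zero_mul, zero_add, mul_zero, sub_zero,
          div_le_div_iff₀ hpos h2K]
        nlinarith
      · rw [one_div_mul_eq_div, ← add_div, div_le_div_iff₀ hpos h2K]
        nlinarith
    linarith

lemma mart_le (b : ℕ → ℤ) (S : ℕ → ℤ) (hb : ∀ j, b j = 0 ∨ b j = 1)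
    (hS : ∀ j, S (j + 1) = S j + 1 - 2 * b (j + 1)) (hS1 : ∀ j, 1 ≤ S j) (K : ℕ) :
    ∑ i ∈ range K, (b (i + 1) : ℝ) / 2 ^ (i + 1) * ((S i : ℝ) + 1) ≤ (S 0 : ℝ) := by
  have h := mart_aux b S hb hS hS1 K
  have h2K : (0:ℝ) < 2 ^ K := by positivity
  have hSK : (1:ℝ) ≤ (S K : ℝ) := by exact_mod_cast hS1 K
  have : (0:ℝ) ≤ (S K : ℝ) / 2 ^ K := by positivity
  linarith

/- ### Convergence of truncations -/

lemma trunc_tendsto (x : ℝ) :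
    Tendsto (fun N : ℕ => ((⌊(2:ℝ) ^ N * x⌋ : ℝ) / 2 ^ N)) atTop (nhds x) := by
  apply tendsto_of_tendsto_of_tendsto_of_le_of_le
    (g := fun N : ℕ => x - (1 / 2 : ℝ) ^ N) (h := fun _ : ℕ => x)
  · have hgeo : Tendsto (fun N : ℕ => (1 / 2 : ℝ) ^ N) atTop (nhds 0) :=
      tendsto_pow_atTop_nhds_zero_of_lt_one (by norm_num) (by norm_num)
    have := tendsto_const_nhds (x := x) (f := atTop (α := ℕ)) |>.sub hgeo
    simpa using this
  · exact tendsto_const_nhds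
  · intro N
    show x - (1 / 2 : ℝ) ^ N ≤ (⌊(2:ℝ) ^ N * x⌋ : ℝ) / 2 ^ N
    have h2N : (0:ℝ) < 2 ^ N := by positivity
    have := Int.lt_floor_add_one ((2:ℝ) ^ N * x)
    have hp : (1/2:ℝ) ^ N = 1 / 2 ^ N := by rw [div_pow, one_pow]
    rw [hp, sub_le_iff_le_add, ← add_div, le_div_iff₀ h2N]
    linarith
  · intro N
    show (⌊(2:ℝ) ^ N * x⌋ : ℝ) / 2 ^ N ≤ x
    have h2N : (0:ℝ) < 2 ^ N := by positivity
    have := Int.floor_le ((2:ℝ) ^ N * x)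
    rw [div_le_iff₀ h2N]
    linarith

end TakagiAux

/-- The Takagi function is nondecreasing on `½Ω^L`. -/
theorem takagi_monotoneOn_halfOmegaL :
    ∀ x₁ ∈ halfOmegaL, ∀ x₂ ∈ halfOmegaL, x₁ ≤ x₂ → takagi x₁ ≤ takagi x₂ := by
  intro x₁ hx1 x₂ hx2 h12
  obtain ⟨hx1I, hD1⟩ := hx1
  obtain ⟨hx2I, hD2⟩ := hx2
  rw [Set.mem_Ico] at hx1I hx2I
  classical
  by_cases hall : ∀ N : ℕ, ⌊(2:ℝ) ^ N * x₁⌋ = ⌊(2:ℝ) ^ N * x₂⌋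
  · -- all floors agree : the two points are equal
    have hxeq : x₁ = x₂ := by
      by_contra hne
      have hpos : 0 < |x₁ - x₂| := abs_pos.2 (sub_ne_zero.2 hne)
      obtain ⟨N, hN⟩ := exists_pow_lt_of_lt_one hpos (by norm_num : (1/2 : ℝ) < 1)
      have h2N : (0:ℝ) < 2 ^ N := by positivity
      have hfl := hall N
      have l1 := Int.floor_le ((2:ℝ) ^ N * x₁)
      have l2 := Int.lt_floor_add_one ((2:ℝ) ^ N * x₁)
      have l3 := Int.floor_le ((2:ℝ) ^ N * x₂)
      have l4 := Int.lt_floor_add_one ((2:ℝ) ^ N * x₂)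
      rw [hfl] at l1 l2
      have habs : |x₁ - x₂| < (1/2 : ℝ) ^ N := by
        rw [abs_sub_lt_iff]
        have hp : (1/2:ℝ) ^ N = 1 / 2 ^ N := by rw [div_pow, one_pow]
        rw [hp]
        have k1 : 2 ^ N * (x₁ - x₂) < 1 := by linarith
        have k2 : 2 ^ N * (x₂ - x₁) < 1 := by linarith
        constructor
        · rw [lt_div_iff₀ h2N]; nlinarith
        · rw [lt_div_iff₀ h2N]; nlinarith
      linarith
    rw [hxeq]
  · push_neg at hall
    obtain ⟨m, hm, hlt⟩ : ∃ m : ℕ, ⌊(2:ℝ) ^ m * x₁⌋ ≠ ⌊(2:ℝ) ^ m * x₂⌋ ∧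
        ∀ k < m, ⌊(2:ℝ) ^ k * x₁⌋ = ⌊(2:ℝ) ^ k * x₂⌋ := by
      refine ⟨Nat.find hall, Nat.find_spec hall, fun k hk => ?_⟩
      by_contra hc
      have := Nat.find_min' hall hc
      omega
    have hm0 : m ≠ 0 := by
      intro h0
      apply hm
      rw [h0]
      have e1 : ⌊(2:ℝ) ^ 0 * x₁⌋ = 0 := by
        rw [pow_zero, one_mul, Int.floor_eq_zero_iff]
        exact Set.mem_Ico.2 ⟨hx1I.1, hx1I.2⟩
      have e2 : ⌊(2:ℝ) ^ 0 * x₂⌋ = 0 := by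
        rw [pow_zero, one_mul, Int.floor_eq_zero_iff]
        exact Set.mem_Ico.2 ⟨hx2I.1, hx2I.2⟩
      rw [e1, e2]
    obtain ⟨n, rfl⟩ : ∃ n, m = n + 1 := ⟨m - 1, by omega⟩
    -- digits below m agree
    have hbeq : ∀ j, 1 ≤ j → j ≤ n → bdigit x₁ j = bdigit x₂ j := by
      intro j hj1 hj
      obtain ⟨i, rfl⟩ : ∃ i, j = i + 1 := ⟨j - 1, by omega⟩
      rw [bdigit_succ, bdigit_succ, hlt (i + 1) (by omega), hlt i (by omega)]
    have hDeq : ∀ j ≤ n, defDigit x₁ j = defDigit x₂ j := by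
      intro j hj
      have hsums : ∑ i ∈ Finset.Icc 1 j, bdigit x₁ i = ∑ i ∈ Finset.Icc 1 j, bdigit x₂ i := by
        apply Finset.sum_congr rfl
        intro i hi
        rw [Finset.mem_Icc] at hi
        exact hbeq i hi.1 (by omega)
      unfold defDigit
      rw [hsums]
    -- digits at position m = n+1
    have hE : ⌊(2:ℝ) ^ n * x₁⌋ = ⌊(2:ℝ) ^ n * x₂⌋ := hlt n (by omega)
    have hb1c := bdigit_cases x₁ n
    have hb2c := bdigit_cases x₂ n
    have hbs1 := bdigit_succ x₁ n
    have hbs2 := bdigit_succ x₂ n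
    have hbne : bdigit x₁ (n + 1) ≠ bdigit x₂ (n + 1) := by
      intro hcontra
      apply hm
      omega
    have hb1 : bdigit x₁ (n + 1) = 0 ∧ bdigit x₂ (n + 1) = 1 := by
      rcases hb1c with h1 | h1 <;> rcases hb2c with h2 | h2
      · exact absurd (h1.trans h2.symm) hbne
      · exact ⟨h1, h2⟩
      · -- impossible : would give x₂ < x₁
        exfalso
        have hfl1 : ⌊(2:ℝ) ^ (n+1) * x₁⌋ = 2 * ⌊(2:ℝ) ^ n * x₂⌋ + 1 := by omega
        have hfl2 : ⌊(2:ℝ) ^ (n+1) * x₂⌋ = 2 * ⌊(2:ℝ) ^ n * x₂⌋ := by omega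
        have l1 := Int.floor_le ((2:ℝ) ^ (n+1) * x₁)
        have l2 := Int.lt_floor_add_one ((2:ℝ) ^ (n+1) * x₂)
        rw [hfl1] at l1
        rw [hfl2] at l2
        push_cast at l1 l2
        have h2n1 : (0:ℝ) < 2 ^ (n+1) := by positivity
        nlinarith
      · exact absurd (h1.trans h2.symm) hbne
    obtain ⟨hb10, hb21⟩ := hb1
    -- the common prefix value E
    set E : ℤ := defDigit x₁ n with hEdef
    have hEx2 : defDigit x₂ n = E := (hDeq n le_rfl).symm
    -- the finite-level inequality
    have key : ∀ K : ℕ,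
        ∑ j ∈ Finset.range ((n + 1) + K),
            (bdigit x₁ (j + 1) : ℝ) / 2 ^ (j + 1) * ((defDigit x₁ j : ℝ) + 1)
          ≤ ∑ j ∈ Finset.range ((n + 1) + K),
            (bdigit x₂ (j + 1) : ℝ) / 2 ^ (j + 1) * ((defDigit x₂ j : ℝ) + 1) := by
      intro K
      have hsplit1 := Finset.sum_range_add
        (fun j => (bdigit x₁ (j + 1) : ℝ) / 2 ^ (j + 1) * ((defDigit x₁ j : ℝ) + 1)) (n + 1) K
      have hsplit2 := Finset.sum_range_add
        (fun j => (bdigit x₂ (j + 1) : ℝ) / 2 ^ (j + 1) * ((defDigit x₂ j : ℝ) + 1)) (n + 1) K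
      rw [hsplit1, hsplit2]
      have hC : ∑ j ∈ Finset.range (n + 1),
            (bdigit x₁ (j + 1) : ℝ) / 2 ^ (j + 1) * ((defDigit x₁ j : ℝ) + 1)
          = (∑ j ∈ Finset.range n,
              (bdigit x₂ (j + 1) : ℝ) / 2 ^ (j + 1) * ((defDigit x₂ j : ℝ) + 1)) := by
        rw [Finset.sum_range_succ, hb10]
        rw [Int.cast_zero, zero_div, zero_mul, add_zero]
        apply Finset.sum_congr rfl
        intro j hj
        rw [Finset.mem_range] at hj
        rw [hbeq (j + 1) (by omega) (by omega), hDeq j (by omega)]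
      have hC2 : ∑ j ∈ Finset.range (n + 1),
            (bdigit x₂ (j + 1) : ℝ) / 2 ^ (j + 1) * ((defDigit x₂ j : ℝ) + 1)
          = (∑ j ∈ Finset.range n,
              (bdigit x₂ (j + 1) : ℝ) / 2 ^ (j + 1) * ((defDigit x₂ j : ℝ) + 1))
            + 1 / 2 ^ (n + 1) * ((E : ℝ) + 1) := by
        rw [Finset.sum_range_succ, hb21, hEx2]
        norm_num
      rw [hC, hC2]
      have htail2 : 0 ≤ ∑ j ∈ Finset.range K,
          (bdigit x₂ ((n + 1) + j + 1) : ℝ) / 2 ^ ((n + 1) + j + 1)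
            * ((defDigit x₂ ((n + 1) + j) : ℝ) + 1) := by
        apply Finset.sum_nonneg
        intro j hj
        have hbj : (0:ℤ) ≤ bdigit x₂ ((n + 1) + j + 1) := by
          rcases bdigit_cases x₂ ((n + 1) + j) with h | h <;> omega
        have hDj : (1:ℤ) ≤ defDigit x₂ ((n + 1) + j) := hD2 _ (by omega)
        have hb' : (0:ℝ) ≤ (bdigit x₂ ((n + 1) + j + 1) : ℝ) := by exact_mod_cast hbj
        have hD' : (1:ℝ) ≤ (defDigit x₂ ((n + 1) + j) : ℝ) := by exact_mod_cast hDj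
        have hp : (0:ℝ) < 2 ^ ((n + 1) + j + 1) := by positivity
        apply mul_nonneg (div_nonneg hb' (le_of_lt hp))
        linarith
      -- bound the x₁ tail by the martingale lemma
      have hmart := mart_le (fun i => bdigit x₁ ((n + 1) + i))
        (fun i => defDigit x₁ ((n + 1) + i))
        (fun j => by
          rcases Nat.eq_zero_or_pos j with rfl | hjpos
          · simpa using bdigit_cases x₁ n
          · obtain ⟨i, rfl⟩ : ∃ i, j = i + 1 := ⟨j - 1, by omega⟩
            exact bdigit_cases x₁ ((n + 1) + i))
        (fun j => defDigit_succ x₁ ((n + 1) + j))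
        (fun j => hD1 _ (by omega)) K
      have hS0 : defDigit x₁ (n + 1) = E + 1 := by
        rw [defDigit_succ, hb10]
        omega
      simp only [Nat.add_zero] at hmart
      rw [hS0] at hmart
      have htail1 : ∑ j ∈ Finset.range K,
          (bdigit x₁ ((n + 1) + j + 1) : ℝ) / 2 ^ ((n + 1) + j + 1)
            * ((defDigit x₁ ((n + 1) + j) : ℝ) + 1)
          ≤ 1 / 2 ^ (n + 1) * ((E : ℝ) + 1) := by
        have hfac : ∀ j ∈ Finset.range K,
            (bdigit x₁ ((n + 1) + j + 1) : ℝ) / 2 ^ ((n + 1) + j + 1)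
              * ((defDigit x₁ ((n + 1) + j) : ℝ) + 1)
            = 1 / 2 ^ (n + 1) * ((bdigit x₁ ((n + 1) + (j + 1)) : ℝ) / 2 ^ (j + 1)
                * ((defDigit x₁ ((n + 1) + j) : ℝ) + 1)) := by
          intro j hj
          have hpow : (2:ℝ) ^ ((n + 1) + j + 1) = 2 ^ (n + 1) * 2 ^ (j + 1) := by
            rw [← pow_add]
            rfl
          have hidx : (n + 1) + (j + 1) = (n + 1) + j + 1 := by omega
          rw [hidx, hpow]
          have h1 : (0:ℝ) < 2 ^ (n+1) := by positivity
          have h2 : (0:ℝ) < 2 ^ (j+1) := by positivity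
          field_simp
          try ring
        rw [Finset.sum_congr rfl hfac, ← Finset.mul_sum]
        have hnn : (0:ℝ) ≤ 1 / 2 ^ (n + 1) := by positivity
        have hcast : ((E + 1 : ℤ) : ℝ) = (E : ℝ) + 1 := by push_cast; ring
        rw [hcast] at hmart
        exact mul_le_mul_of_nonneg_left hmart hnn
      linarith
    -- pass to the limit
    have ht1 : Filter.Tendsto (fun K : ℕ => ∑ j ∈ Finset.range ((n + 1) + K),
        (bdigit x₁ (j + 1) : ℝ) / 2 ^ (j + 1) * ((defDigit x₁ j : ℝ) + 1))
        Filter.atTop (nhds (takagi x₁)) := by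
      have hcomp : Filter.Tendsto (fun N : ℕ => takagi ((⌊(2:ℝ) ^ N * x₁⌋ : ℝ) / 2 ^ N))
          Filter.atTop (nhds (takagi x₁)) :=
        (takagi_continuous.tendsto x₁).comp (trunc_tendsto x₁)
      have hshift : Filter.Tendsto (fun K : ℕ => (n + 1) + K) Filter.atTop Filter.atTop := by
        simpa [Nat.add_comm] using Filter.tendsto_add_atTop_nat (n + 1)
      have := hcomp.comp hshift
      refine this.congr fun K => ?_
      exact takagi_trunc x₁ ((n + 1) + K)
    have ht2 : Filter.Tendsto (fun K : ℕ => ∑ j ∈ Finset.range ((n + 1) + K),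
        (bdigit x₂ (j + 1) : ℝ) / 2 ^ (j + 1) * ((defDigit x₂ j : ℝ) + 1))
        Filter.atTop (nhds (takagi x₂)) := by
      have hcomp : Filter.Tendsto (fun N : ℕ => takagi ((⌊(2:ℝ) ^ N * x₂⌋ : ℝ) / 2 ^ N))
          Filter.atTop (nhds (takagi x₂)) :=
        (takagi_continuous.tendsto x₂).comp (trunc_tendsto x₂)
      have hshift : Filter.Tendsto (fun K : ℕ => (n + 1) + K) Filter.atTop Filter.atTop := by
        simpa [Nat.add_comm] using Filter.tendsto_add_atTop_nat (n + 1)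
      have := hcomp.comp hshift
      refine this.congr fun K => ?_
      exact takagi_trunc x₂ ((n + 1) + K)
    exact le_of_tendsto_of_tendsto' ht1 ht2 key
end

section
/- The function x ↦ τ(x) + x is nondecreasing on the deficient digit set Ω^L: if x₁, x₂ ∈ Ω^L and x₁ ≤ x₂, then τ(x₁) + x₁ ≤ τ(x₂) + x₂. -/
open MeasureTheory Set

namespace TakagiAux

noncomputable def rr (x : ℝ) (n : ℕ) : ℝ := Int.fract (2 ^ n * x)
noncomputable def dg (x : ℝ) (n : ℕ) : ℤ := ⌊2 * rr x n⌋

lemma rr_nonneg (x : ℝ) (n : ℕ) : 0 ≤ rr x n := Int.fract_nonneg _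
lemma rr_lt_one (x : ℝ) (n : ℕ) : rr x n < 1 := Int.fract_lt_one _

lemma dg01 (x : ℝ) (n : ℕ) : dg x n = 0 ∨ dg x n = 1 := by
  have h0 : (0:ℤ) ≤ dg x n := Int.floor_nonneg.2 (by nlinarith [rr_nonneg x n])
  have h1 : dg x n < 2 := Int.floor_lt.2 (by push_cast; nlinarith [rr_lt_one x n])
  omega

lemma two_pow_succ_mul (x : ℝ) (n : ℕ) :
    (2:ℝ) ^ (n+1) * x = 2 * rr x n + ((2 * ⌊(2:ℝ)^n * x⌋ : ℤ) : ℝ) := by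
  have h : ((⌊(2:ℝ)^n * x⌋ : ℝ)) + rr x n = 2^n * x := Int.floor_add_fract _
  have h2 : (2:ℝ)^(n+1)*x = 2*((2:ℝ)^n*x) := by ring
  push_cast
  linarith [h, h2]

lemma floor_succ (x : ℝ) (n : ℕ) :
    ⌊(2:ℝ) ^ (n+1) * x⌋ = dg x n + 2 * ⌊(2:ℝ)^n * x⌋ := by
  rw [two_pow_succ_mul, Int.floor_add_intCast]; rfl

lemma rr_succ (x : ℝ) (n : ℕ) : rr x (n+1) = 2 * rr x n - (dg x n : ℝ) := by
  show Int.fract _ = _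
  rw [two_pow_succ_mul, Int.fract_add_intCast, Int.fract, dg]

lemma round_fract_eq (x : ℝ) (n : ℕ) : round (rr x n) = dg x n := by
  have h0 := rr_nonneg x n; have h1 := rr_lt_one x n
  rw [round_eq]
  rcases lt_or_ge (rr x n) (1/2) with h | h
  · have e1 : ⌊rr x n + 1/2⌋ = 0 := Int.floor_eq_zero_iff.2 ⟨by linarith, by linarith⟩
    have e2 : dg x n = 0 := Int.floor_eq_zero_iff.2 ⟨by linarith, by linarith⟩
    rw [e1, e2]
  · have e1 : ⌊rr x n + 1/2⌋ = 1 := by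
      rw [Int.floor_eq_iff]; constructor <;> [push_cast; push_cast] <;> linarith
    have e2 : dg x n = 1 := by
      rw [dg, Int.floor_eq_iff]; constructor <;> push_cast <;> linarith
    rw [e1, e2]

lemma dist_eq (x : ℝ) (n : ℕ) :
    distNearestInt (2 ^ n * x) = (dg x n : ℝ) + (1 - 2 * (dg x n : ℝ)) * rr x n := by
  have hfl : ((⌊(2:ℝ)^n * x⌋ : ℝ)) + rr x n = 2^n * x := Int.floor_add_fract _
  have hr : round ((2:ℝ)^n * x) = ⌊(2:ℝ)^n*x⌋ + dg x n := by
    have e : (2:ℝ)^n*x = rr x n + ((⌊(2:ℝ)^n*x⌋:ℤ):ℝ) := by push_cast; linarith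
    nth_rewrite 1 [e]
    rw [round_add_intCast, round_fract_eq, add_comm]
  have h0 := rr_nonneg x n; have h1 := rr_lt_one x n
  rw [distNearestInt, hr]
  have : (2:ℝ)^n * x - ((⌊(2:ℝ)^n*x⌋ + dg x n : ℤ):ℝ) = rr x n - (dg x n : ℝ) := by
    push_cast; linarith
  rw [this]
  rcases dg01 x n with h | h <;> rw [h] <;> push_cast
  · rw [abs_of_nonneg (by linarith)]; ring
  · rw [abs_of_nonpos (by linarith)]; ring


noncomputable def DD (x : ℝ) (N : ℕ) : ℤ := (N : ℤ) - 2 * ∑ n ∈ Finset.range N, dg x n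
noncomputable def SS (x : ℝ) (N : ℕ) : ℝ :=
  ∑ n ∈ Finset.range N, (dg x n : ℝ) * ((DD x n : ℝ) + 2) / 2 ^ (n + 1)
noncomputable def PP (x : ℝ) (N : ℕ) : ℝ :=
  ∑ n ∈ Finset.range N, distNearestInt (2 ^ n * x) / 2 ^ n

lemma DD_succ (x : ℝ) (N : ℕ) :
    ((DD x (N+1) : ℝ)) = (DD x N : ℝ) + 1 - 2 * (dg x N : ℝ) := by
  simp only [DD, Finset.sum_range_succ]; push_cast; ring

lemma key (x : ℝ) (hx0 : 0 ≤ x) (hx1 : x < 1) (N : ℕ) :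
    PP x N + x = SS x N + ((DD x N : ℝ) + 1) * rr x N / 2 ^ N := by
  induction N with
  | zero =>
    have : rr x 0 = x := by
      show Int.fract _ = x
      rw [pow_zero, one_mul, Int.fract_eq_self.2 ⟨hx0, hx1⟩]
    simp [PP, SS, DD, this]
  | succ N ih =>
    have hp : (0:ℝ) < 2 ^ N := by positivity
    have hPP : PP x (N+1) = PP x N + distNearestInt (2 ^ N * x) / 2 ^ N := by
      simp [PP, Finset.sum_range_succ]
    have hSS : SS x (N+1) = SS x N + (dg x N : ℝ) * ((DD x N : ℝ) + 2) / 2 ^ (N + 1) := by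
      simp [SS, Finset.sum_range_succ]
    rcases dg01 x N with h | h <;>
      rw [hPP, hSS, DD_succ x N, rr_succ x N, dist_eq x N, h] <;>
      push_cast <;>
      linear_combination ih

lemma distNearestInt_nonneg (t : ℝ) : 0 ≤ distNearestInt t := abs_nonneg _

lemma summable_phi (x : ℝ) : Summable fun n : ℕ => distNearestInt (2 ^ n * x) / 2 ^ n := by
  apply Summable.of_nonneg_of_le (fun n => div_nonneg (distNearestInt_nonneg _) (by positivity)) (fun n => ?_) summable_geometric_two
  have h1 : distNearestInt (2 ^ n * x) ≤ 1 :=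
    le_trans (abs_sub_round _) (by norm_num)
  calc distNearestInt (2 ^ n * x) / 2 ^ n ≤ 1 / 2 ^ n := by gcongr
    _ = (1/2)^n := by rw [div_pow, one_pow]

lemma tendsto_PP (x : ℝ) :
    Filter.Tendsto (fun N => PP x N + x) Filter.atTop (nhds (takagi x + x)) :=
  Filter.Tendsto.add_const x ((summable_phi x).hasSum.tendsto_sum_nat)

lemma PP_le (x : ℝ) (N : ℕ) : PP x N ≤ takagi x :=
  Summable.sum_le_tsum _ (fun n _ => div_nonneg (distNearestInt_nonneg _) (by positivity)) (summable_phi x)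


lemma bdigit_eq (x : ℝ) (n : ℕ) : bdigit x (n+1) = dg x n := by
  unfold bdigit
  simp only [Nat.add_sub_cancel]
  rw [floor_succ]; ring

lemma defDigit_eq (x : ℝ) (N : ℕ) : defDigit x N = DD x N := by
  unfold defDigit DD
  congr 1
  rw [← Finset.Ico_add_one_right_eq_Icc, Finset.sum_Ico_eq_sum_range]
  have hN : Finset.range (N + 1 - 1) = Finset.range N := by congr 1
  rw [hN]
  congr 1
  exact Finset.sum_congr rfl fun i _ => by rw [add_comm 1 i, bdigit_eq]

lemma DD_nonneg {x : ℝ} (hx : x ∈ OmegaL) (N : ℕ) : 0 ≤ DD x N := by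
  rcases N with _ | N
  · simp [DD]
  · rw [← defDigit_eq]; exact hx.2 (N+1) (Nat.succ_le_succ (Nat.zero_le _))

lemma SS_le {x : ℝ} (hx : x ∈ OmegaL) (N : ℕ) : SS x N ≤ takagi x + x := by
  have hD : (0:ℝ) ≤ (DD x N : ℝ) := by exact_mod_cast DD_nonneg hx N
  have h1 : SS x N ≤ PP x N + x := by
    rw [key x hx.1.1 hx.1.2 N]
    have h2 : (0:ℝ) ≤ ((DD x N : ℝ) + 1) * rr x N / 2 ^ N :=
      div_nonneg (mul_nonneg (by linarith) (rr_nonneg x N)) (by positivity)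
    linarith
  linarith [PP_le x N]

lemma g_mono {x : ℝ} (hx : x ∈ OmegaL) {J N : ℕ} (hJN : J ≤ N) :
    SS x N + ((DD x N : ℝ) + 1) / 2 ^ N ≤ SS x J + ((DD x J : ℝ) + 1) / 2 ^ J := by
  induction N, hJN using Nat.le_induction with
  | base => exact le_rfl
  | succ N hJN ih =>
    refine le_trans ?_ ih
    have hD : (0:ℝ) ≤ (DD x N : ℝ) := by exact_mod_cast DD_nonneg hx N
    have hp : (0:ℝ) < 2 ^ N := by positivity
    have hSS : SS x (N+1) = SS x N + (dg x N : ℝ) * ((DD x N : ℝ) + 2) / 2 ^ (N + 1) := by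
      simp [SS, Finset.sum_range_succ]
    rw [hSS, DD_succ x N]
    have h12 : (0:ℝ) < (1/2:ℝ) ^ N := by positivity
    rcases dg01 x N with h | h <;> rw [h] <;> push_cast <;> ring_nf <;>
      nlinarith [mul_nonneg hD h12.le, h12]

lemma le_SS {x : ℝ} (hx : x ∈ OmegaL) (J : ℕ) :
    takagi x + x ≤ SS x J + ((DD x J : ℝ) + 1) / 2 ^ J := by
  refine le_of_tendsto (tendsto_PP x) ?_
  filter_upwards [Filter.eventually_ge_atTop J] with N hN
  have hD : (0:ℝ) ≤ (DD x N : ℝ) := by exact_mod_cast DD_nonneg hx N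
  have h1 : PP x N + x ≤ SS x N + ((DD x N : ℝ) + 1) / 2 ^ N := by
    rw [key x hx.1.1 hx.1.2 N]
    have hr1 := rr_lt_one x N
    have hr0 := rr_nonneg x N
    have hp : (0:ℝ) < 2 ^ N := by positivity
    have hm : ((DD x N : ℝ) + 1) * rr x N ≤ (DD x N : ℝ) + 1 := by nlinarith
    have := (div_le_div_iff_of_pos_right hp).2 hm
    linarith [(div_le_div_iff_of_pos_right hp).2 hm]
  exact h1.trans (g_mono hx hN)


lemma floor_zero {x : ℝ} (h0 : 0 ≤ x) (h1 : x < 1) : ⌊x⌋ = 0 :=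
  Int.floor_eq_zero_iff.2 ⟨h0, h1⟩

lemma floors_eq {x₁ x₂ : ℝ} (h₁ : x₁ ∈ Set.Ico (0:ℝ) 1) (h₂ : x₂ ∈ Set.Ico (0:ℝ) 1)
    {J : ℕ} (h : ∀ n < J, dg x₁ n = dg x₂ n) :
    ∀ n ≤ J, ⌊(2:ℝ)^n * x₁⌋ = ⌊(2:ℝ)^n * x₂⌋ := by
  intro n
  induction n with
  | zero =>
    intro _
    simp only [pow_zero, one_mul]
    rw [floor_zero h₁.1 h₁.2, floor_zero h₂.1 h₂.2]
  | succ n ih =>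
    intro hn
    rw [floor_succ, floor_succ, h n (by omega), ih (by omega)]

lemma eq_of_dg_eq {x₁ x₂ : ℝ} (h₁ : x₁ ∈ Set.Ico (0:ℝ) 1) (h₂ : x₂ ∈ Set.Ico (0:ℝ) 1)
    (h : ∀ n, dg x₁ n = dg x₂ n) : x₁ = x₂ := by
  have key2 : ∀ n : ℕ, |x₁ - x₂| ≤ (1/2:ℝ)^n := by
    intro n
    have hf := floors_eq h₁ h₂ (J := n) (fun m _ => h m) n le_rfl
    have a1 : ((⌊(2:ℝ)^n * x₁⌋:ℝ)) + rr x₁ n = 2^n * x₁ := Int.floor_add_fract _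
    have a2 : ((⌊(2:ℝ)^n * x₂⌋:ℝ)) + rr x₂ n = 2^n * x₂ := Int.floor_add_fract _
    have hp : (0:ℝ) < 2^n := by positivity
    have hcast : ((⌊(2:ℝ)^n * x₁⌋:ℝ)) = ((⌊(2:ℝ)^n * x₂⌋:ℝ)) := by exact_mod_cast hf
    have hdiff : (2:ℝ)^n * (x₁ - x₂) = rr x₁ n - rr x₂ n := by
      have e1 : (2:ℝ)^n * x₁ - 2^n * x₂ = rr x₁ n - rr x₂ n := by linarith
      linarith [mul_sub ((2:ℝ)^n) x₁ x₂, e1]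
    have hb : |rr x₁ n - rr x₂ n| ≤ 1 := by
      rw [abs_le]
      constructor <;>
        nlinarith [rr_nonneg x₁ n, rr_nonneg x₂ n, rr_lt_one x₁ n, rr_lt_one x₂ n]
    have hb2 : (2:ℝ)^n * |x₁ - x₂| ≤ 1 := by
      rw [← abs_of_pos hp, ← abs_mul, hdiff]; exact hb
    rw [div_pow, one_pow]
    rw [le_div_iff₀ hp]
    linarith [hb2]
  have h0 : |x₁ - x₂| ≤ 0 :=
    ge_of_tendsto' (tendsto_pow_atTop_nhds_zero_of_lt_one (by norm_num) (by norm_num)) key2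
  have h1 := abs_nonneg (x₁ - x₂)
  have : x₁ - x₂ = 0 := abs_eq_zero.1 (le_antisymm h0 h1)
  linarith

end TakagiAux

open TakagiAux

/-- `x ↦ τ(x) + x` is nondecreasing on `Ω^L`. -/
theorem takagi_add_id_monotoneOn_omegaL :
    ∀ x₁ ∈ OmegaL, ∀ x₂ ∈ OmegaL, x₁ ≤ x₂ → takagi x₁ + x₁ ≤ takagi x₂ + x₂ := by
  intro x₁ h₁ x₂ h₂ hle
  rcases eq_or_lt_of_le hle with rfl | hlt
  · exact le_refl _
  by_cases hall : ∀ n, dg x₁ n = dg x₂ n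
  · exact absurd (eq_of_dg_eq h₁.1 h₂.1 hall) hlt.ne
  push_neg at hall
  classical
  set J := Nat.find hall with hJdef
  have hJne : dg x₁ J ≠ dg x₂ J := Nat.find_spec hall
  have hJlt : ∀ n < J, dg x₁ n = dg x₂ n := fun n hn => not_not.1 (Nat.find_min hall hn)
  have hfl : ∀ n ≤ J, ⌊(2:ℝ)^n*x₁⌋ = ⌊(2:ℝ)^n*x₂⌋ := floors_eq h₁.1 h₂.1 hJlt
  have hd : dg x₁ J = 0 ∧ dg x₂ J = 1 := by
    rcases dg01 x₁ J with a0 | a1 <;> rcases dg01 x₂ J with b0 | b1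
    · exact absurd (a0.trans b0.symm) hJne
    · exact ⟨a0, b1⟩
    · exfalso
      have e1 : ⌊(2:ℝ)^(J+1)*x₁⌋ = 1 + 2*⌊(2:ℝ)^J*x₁⌋ := by rw [floor_succ, a1]
      have e2 : ⌊(2:ℝ)^(J+1)*x₂⌋ = 2*⌊(2:ℝ)^J*x₁⌋ := by
        rw [floor_succ, b0, hfl J le_rfl]; ring
      have l1 := Int.floor_le ((2:ℝ)^(J+1)*x₁)
      rw [e1] at l1
      have l2 := Int.lt_floor_add_one ((2:ℝ)^(J+1)*x₂)
      rw [e2] at l2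
      have hp : (0:ℝ) < 2^(J+1) := by positivity
      have : (2:ℝ)^(J+1)*x₂ < 2^(J+1)*x₁ := by push_cast at l1 l2; linarith
      nlinarith
    · exact absurd (a1.trans b1.symm) hJne
  have hDDeq : ∀ n, n ≤ J → DD x₁ n = DD x₂ n := by
    intro n hn
    unfold DD
    congr 1
    exact congrArg (2 * ·) (Finset.sum_congr rfl fun m hm =>
      hJlt m (lt_of_lt_of_le (Finset.mem_range.1 hm) hn))
  have hSSeq : SS x₁ J = SS x₂ J := by
    unfold SS
    refine Finset.sum_congr rfl fun m hm => ?_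
    have hm' : m < J := Finset.mem_range.1 hm
    rw [hJlt m hm', hDDeq m hm'.le]
  have hS1 : SS x₁ (J+1) = SS x₁ J := by
    simp [SS, Finset.sum_range_succ, hd.1]
  have hD1 : (DD x₁ (J+1) : ℝ) = (DD x₁ J : ℝ) + 1 := by
    rw [DD_succ, hd.1]; push_cast; ring
  have hS2 : SS x₂ (J+1) = SS x₂ J + ((DD x₂ J:ℝ)+2)/2^(J+1) := by
    simp [SS, Finset.sum_range_succ, hd.2]
  have hDcast : (DD x₁ J : ℝ) = (DD x₂ J : ℝ) := by exact_mod_cast hDDeq J le_rfl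
  calc takagi x₁ + x₁ ≤ SS x₁ (J+1) + ((DD x₁ (J+1):ℝ)+1)/2^(J+1) := le_SS h₁ (J+1)
    _ = SS x₂ J + ((DD x₂ J:ℝ)+2)/2^(J+1) := by
        rw [hS1, hD1, hSSeq, hDcast]; ring_nf
    _ = SS x₂ (J+1) := hS2.symm
    _ ≤ takagi x₂ + x₂ := SS_le h₂ (J+1)
end

section
/- The set Ω^L_fin is the union over all B in the breakpoint set ℬ' of the fine partition sets Ω^L(B); these sets Ω^L(B) are pairwise disjoint, and each Ω^L(B) is a closed set. -/
open MeasureTheory Set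

namespace FPaux

lemma floor_div_int (a : ℝ) (n : ℤ) (hn : 0 < n) : ⌊a / (n : ℝ)⌋ = ⌊a⌋ / n := by
  have hn' : (0 : ℝ) < (n : ℝ) := by exact_mod_cast hn
  have h1 : ((⌊a⌋ / n : ℤ) : ℝ) ≤ a / n := by
    rw [le_div_iff₀ hn']
    calc ((⌊a⌋ / n : ℤ) : ℝ) * n = ((⌊a⌋ / n * n : ℤ) : ℝ) := by push_cast; ring
      _ ≤ (⌊a⌋ : ℝ) := by exact_mod_cast Int.ediv_mul_le ⌊a⌋ (ne_of_gt hn)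
      _ ≤ a := Int.floor_le a
  have h2 : a / n < ((⌊a⌋ / n : ℤ) : ℝ) + 1 := by
    rw [div_lt_iff₀ hn']
    have h := Int.lt_ediv_add_one_mul_self ⌊a⌋ hn
    calc a < (⌊a⌋ : ℝ) + 1 := Int.lt_floor_add_one a
      _ ≤ (((⌊a⌋ / n + 1) * n : ℤ) : ℝ) := by exact_mod_cast Int.add_one_le_iff.mpr h
      _ = (((⌊a⌋ / n : ℤ) : ℝ) + 1) * n := by push_cast; ring
  exact Int.floor_eq_iff.mpr ⟨h1, h2⟩

lemma floor_nest (y : ℝ) {j N : ℕ} (h : j ≤ N) :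
    ⌊(2 : ℝ) ^ j * y⌋ = ⌊(2 : ℝ) ^ N * y⌋ / 2 ^ (N - j) := by
  have hp : (2 : ℝ) ^ N = 2 ^ j * 2 ^ (N - j) := by
    rw [← pow_add]; congr 1; omega
  have h2 : (2 : ℝ) ^ j * y = ((2 : ℝ) ^ N * y) / (((2 ^ (N - j) : ℤ)) : ℝ) := by
    rw [hp]; push_cast
    have h2 : ((2:ℝ))^(N-j) ≠ 0 := by positivity
    field_simp
  rw [h2, floor_div_int _ _ (by positivity)]

lemma bdigit_mod (y : ℝ) {j N : ℕ} (h1 : 1 ≤ j) (hN : j ≤ N) :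
    bdigit y j = (⌊(2 : ℝ) ^ N * y⌋ / 2 ^ (N - j)) % 2 := by
  have e1 : ⌊(2 : ℝ) ^ j * y⌋ = ⌊(2 : ℝ) ^ N * y⌋ / 2 ^ (N - j) := floor_nest y hN
  have e2 : ⌊(2 : ℝ) ^ (j - 1) * y⌋ = ⌊(2 : ℝ) ^ j * y⌋ / 2 := by
    have hp : (2 : ℝ) ^ (j - 1) * y = ((2 : ℝ) ^ j * y) / ((2 : ℤ) : ℝ) := by
      have : (2 : ℝ) ^ j = 2 ^ (j - 1) * 2 := by rw [← pow_succ]; congr 1; omega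
      rw [this]; push_cast; ring
    rw [hp, floor_div_int _ _ (by norm_num)]
  rw [bdigit, e2, e1, Int.emod_def]

lemma bdigit_nonneg (y : ℝ) {j : ℕ} (h1 : 1 ≤ j) : 0 ≤ bdigit y j := by
  rw [bdigit_mod y h1 (le_refl j)]
  exact Int.emod_nonneg _ (by norm_num)

lemma defDigit_congr {x y : ℝ} {N : ℕ} (h : ⌊(2 : ℝ) ^ N * x⌋ = ⌊(2 : ℝ) ^ N * y⌋)
    {j : ℕ} (hj : j ≤ N) : defDigit x j = defDigit y j := by
  unfold defDigit
  congr 1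
  congr 1
  apply Finset.sum_congr rfl
  intro i hi
  rw [Finset.mem_Icc] at hi
  rw [bdigit_mod x hi.1 (le_trans hi.2 hj), bdigit_mod y hi.1 (le_trans hi.2 hj), h]

lemma defDigit_zero (x : ℝ) : defDigit x 0 = 0 := by simp [defDigit]

lemma floor_high (m k i : ℕ) (x' : ℝ) :
    ⌊(2 : ℝ) ^ (2 * m + i) * (((k : ℝ) + x') / 2 ^ (2 * m))⌋
      = (k : ℤ) * 2 ^ i + ⌊(2 : ℝ) ^ i * x'⌋ := by
  have h : (2 : ℝ) ^ (2 * m + i) * (((k : ℝ) + x') / 2 ^ (2 * m))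
      = (((k : ℤ) * 2 ^ i : ℤ) : ℝ) + (2 : ℝ) ^ i * x' := by
    rw [pow_add]; push_cast; field_simp
  rw [h, Int.floor_intCast_add]

lemma floor_base (m k : ℕ) (x' : ℝ) (h0 : 0 ≤ x') (h1 : x' < 1) :
    ⌊(2 : ℝ) ^ (2 * m) * (((k : ℝ) + x') / 2 ^ (2 * m))⌋ = k := by
  have h : (2 : ℝ) ^ (2 * m) * (((k : ℝ) + x') / 2 ^ (2 * m)) = ((k : ℤ) : ℝ) + x' := by
    push_cast; field_simp
  rw [h, Int.floor_intCast_add, Int.floor_eq_zero_iff.mpr (Set.mem_Ico.mpr ⟨h0, h1⟩), add_zero]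

lemma defDigit_low (m k : ℕ) (x' : ℝ) (h0 : 0 ≤ x') (h1 : x' < 1) {j : ℕ} (hj : j ≤ 2 * m) :
    defDigit (((k : ℝ) + x') / 2 ^ (2 * m)) j = defDigit ((k : ℝ) / 2 ^ (2 * m)) j := by
  apply defDigit_congr (N := 2 * m) _ hj
  rw [floor_base m k x' h0 h1]
  have h : (2 : ℝ) ^ (2 * m) * ((k : ℝ) / 2 ^ (2 * m)) = ((k : ℤ) : ℝ) := by
    push_cast; field_simp
  rw [h, Int.floor_intCast]

lemma bdigit_high (m k : ℕ) (x' : ℝ) {i : ℕ} (hi : 1 ≤ i) :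
    bdigit (((k : ℝ) + x') / 2 ^ (2 * m)) (2 * m + i) = bdigit x' i := by
  obtain ⟨i', rfl⟩ : ∃ i', i = i' + 1 := ⟨i - 1, by omega⟩
  rw [bdigit, bdigit]
  have h1 : 2 * m + (i' + 1) - 1 = 2 * m + i' := by omega
  have h2 : i' + 1 - 1 = i' := by omega
  rw [h1, h2, floor_high, floor_high]
  push_cast
  ring

lemma Icc_one_eq_Ioc (n : ℕ) : Finset.Icc 1 n = Finset.Ioc 0 n := by
  ext a; simp [Finset.mem_Icc, Finset.mem_Ioc]; omega

lemma defDigit_split (m k : ℕ) (x' : ℝ) (i : ℕ) :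
    defDigit (((k : ℝ) + x') / 2 ^ (2 * m)) (2 * m + i)
      = defDigit (((k : ℝ) + x') / 2 ^ (2 * m)) (2 * m) + defDigit x' i := by
  set x := ((k : ℝ) + x') / 2 ^ (2 * m) with hx
  have hsplit : ∑ l ∈ Finset.Icc 1 (2 * m + i), bdigit x l
      = ∑ l ∈ Finset.Icc 1 (2 * m), bdigit x l + ∑ l ∈ Finset.Icc 1 i, bdigit x' l := by
    rw [Icc_one_eq_Ioc, Icc_one_eq_Ioc, Icc_one_eq_Ioc,
      ← Finset.sum_Ioc_consecutive (fun l => bdigit x l) (Nat.zero_le (2 * m))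
        (Nat.le_add_right (2 * m) i)]
    congr 1
    rw [show Finset.Ioc (2 * m) (2 * m + i) = Finset.Ioc (2 * m + 0) (2 * m + i) by rw [add_zero],
      ← Finset.map_add_left_Ioc 0 i (2 * m), Finset.sum_map]
    apply Finset.sum_congr rfl
    intro l hl
    rw [Finset.mem_Ioc] at hl
    rw [addLeftEmbedding_apply]
    exact bdigit_high m k x' hl.1
  rw [defDigit, defDigit, defDigit, hsplit]
  push_cast
  ring

lemma defDigit_le_of_floor (y : ℝ) {s N : ℕ} (hsN : s < N) (a : ℤ)
    (hfl : ⌊(2 : ℝ) ^ N * y⌋ = a * 2 ^ (N - s) - 1) :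
    defDigit y N ≤ 2 * (s : ℤ) - N := by
  set t := ⌊(2 : ℝ) ^ N * y⌋ with ht
  have hone : ∀ j ∈ Finset.Icc (s + 1) N, bdigit y j = 1 := by
    intro j hj
    rw [Finset.mem_Icc] at hj
    have hj1 : 1 ≤ j := by omega
    rw [bdigit_mod y hj1 hj.2, ← ht]
    set p := N - j with hp
    set d := N - s with hd
    have hpd : p + 1 ≤ d := by omega
    have epow : (2 : ℤ) ^ (d - p) * 2 ^ p = 2 ^ d := by rw [← pow_add]; congr 1; omega
    have et : t = (2 ^ p - 1) + (a * 2 ^ (d - p) - 1) * 2 ^ p := by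
      rw [hfl]; linear_combination (-a) * epow
    have ediv : t / 2 ^ p = a * 2 ^ (d - p) - 1 := by
      have hpp : (0:ℤ) < 2 ^ p := pow_pos (by norm_num) p
      rw [et, Int.add_mul_ediv_right _ _ (ne_of_gt hpp),
        Int.ediv_eq_zero_of_lt (by linarith) (by linarith), zero_add]
    rw [ediv]
    have e2 : a * 2 ^ (d - p) - 1 = -1 + 2 * (a * 2 ^ (d - p - 1)) := by
      have : (2 : ℤ) ^ (d - p) = 2 * 2 ^ (d - p - 1) := by
        rw [← pow_succ']; congr 1; omega
      rw [this]; ring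
    rw [e2, Int.add_mul_emod_self_left]
    decide
  have hsum : (N : ℤ) - (s : ℤ) ≤ ∑ j ∈ Finset.Icc 1 N, bdigit y j := by
    have h1 : ∑ j ∈ Finset.Icc (s + 1) N, bdigit y j ≤ ∑ j ∈ Finset.Icc 1 N, bdigit y j := by
      apply Finset.sum_le_sum_of_subset_of_nonneg
      · apply Finset.Icc_subset_Icc_left; omega
      · intro j hj _
        rw [Finset.mem_Icc] at hj
        exact bdigit_nonneg y hj.1
    have h2 : ∑ j ∈ Finset.Icc (s + 1) N, bdigit y j = ((N - s : ℕ) : ℤ) := by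
      rw [Finset.sum_congr rfl hone, Finset.sum_const, Nat.card_Icc]
      simp
    rw [h2] at h1
    calc (N : ℤ) - (s : ℤ) = ((N - s : ℕ) : ℤ) := by omega
      _ ≤ _ := h1
  rw [defDigit]
  linarith

lemma exists_bad (x : ℝ) (hx : x ∉ halfOmegaL) (h0 : 0 ≤ x) (h1 : x < 1) :
    ∃ J : ℕ, 1 ≤ J ∧ defDigit x J ≤ 0 := by
  by_contra h
  push_neg at h
  exact hx ⟨Set.mem_Ico.mpr ⟨h0, h1⟩, fun j hj => h j hj⟩

lemma not_mem_of_floor_eq {x y : ℝ} {J : ℕ} (hJ : 1 ≤ J) (hD : defDigit x J ≤ 0)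
    (h : ⌊(2 : ℝ) ^ J * y⌋ = ⌊(2 : ℝ) ^ J * x⌋) : y ∉ halfOmegaL := by
  intro hy
  have := hy.2 J hJ
  rw [defDigit_congr h (le_refl J)] at this
  omega

lemma halfOmegaL_isClosed : IsClosed halfOmegaL := by
  rw [← isOpen_compl_iff, Metric.isOpen_iff]
  intro x hx
  rw [Set.mem_compl_iff] at hx
  have hL : ∃ ε > 0, ∀ y : ℝ, x - ε < y → y < x → y ∉ halfOmegaL := by
    rcases le_or_gt x 0 with h0 | h0
    · exact ⟨1, one_pos, fun y _ hy hmem => absurd hmem.1.1 (by linarith)⟩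
    by_cases hdy : ∃ s : ℕ, ∃ a : ℤ, (2 : ℝ) ^ s * x = (a : ℝ)
    · obtain ⟨s, a, hsa⟩ := hdy
      set N := 2 * s + 1 with hN
      refine ⟨((2 : ℝ) ^ N)⁻¹, by positivity, ?_⟩
      intro y hy1 hy2 hmem
      have hNx : (2 : ℝ) ^ N * x = (a : ℝ) * 2 ^ (N - s) := by
        have hp : (2 : ℝ) ^ N = 2 ^ (N - s) * 2 ^ s := by rw [← pow_add]; congr 1; omega
        rw [hp, mul_assoc, hsa]; ring
      have hfl : ⌊(2 : ℝ) ^ N * y⌋ = a * 2 ^ (N - s) - 1 := by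
        rw [Int.floor_eq_iff]
        constructor
        · push_cast
          have : (2 : ℝ) ^ N * (x - ((2 : ℝ) ^ N)⁻¹) < 2 ^ N * y := by
            apply mul_lt_mul_of_pos_left hy1 (by positivity)
          rw [mul_sub, hNx, mul_inv_cancel₀ (by positivity)] at this
          linarith
        · push_cast
          have : (2 : ℝ) ^ N * y < 2 ^ N * x := mul_lt_mul_of_pos_left hy2 (by positivity)
          rw [hNx] at this
          linarith
      have hle := defDigit_le_of_floor y (show s < N by omega) a hfl
      have := hmem.2 N (by omega)
      omega
    · push_neg at hdy
      rcases le_or_gt 1 x with h1 | h1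
      · have hne : x ≠ 1 := by
          intro h; exact hdy 0 1 (by rw [h]; norm_num)
        refine ⟨x - 1, by cases lt_or_eq_of_le h1 with
          | inl h => linarith
          | inr h => exact absurd h.symm hne, ?_⟩
        intro y hy1 _ hmem
        have := hmem.1.2
        linarith
      · obtain ⟨J, hJ1, hJD⟩ := exists_bad x hx (le_of_lt h0) h1
        have hne : (2 : ℝ) ^ J * x ≠ ((⌊(2 : ℝ) ^ J * x⌋ : ℤ) : ℝ) := fun h => hdy J _ h
        have hlt : ((⌊(2 : ℝ) ^ J * x⌋ : ℤ) : ℝ) < (2 : ℝ) ^ J * x :=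
          lt_of_le_of_ne (Int.floor_le _) (Ne.symm hne)
        refine ⟨((2 : ℝ) ^ J * x - (⌊(2 : ℝ) ^ J * x⌋ : ℝ)) / 2 ^ J, div_pos (by linarith) (by positivity), ?_⟩
        intro y hy1 hy2
        apply not_mem_of_floor_eq hJ1 hJD
        rw [Int.floor_eq_iff]
        constructor
        · have : (2 : ℝ) ^ J * (x - ((2 : ℝ) ^ J * x - (⌊(2 : ℝ) ^ J * x⌋ : ℝ)) / 2 ^ J)
              < 2 ^ J * y := mul_lt_mul_of_pos_left hy1 (by positivity)
          rw [mul_sub, mul_div_cancel₀ _ (by positivity : ((2:ℝ)^J) ≠ 0)] at this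
          linarith
        · have : (2 : ℝ) ^ J * y < 2 ^ J * x := mul_lt_mul_of_pos_left hy2 (by positivity)
          calc (2 : ℝ) ^ J * y < 2 ^ J * x := this
            _ < (⌊(2 : ℝ) ^ J * x⌋ : ℝ) + 1 := Int.lt_floor_add_one _
  have hR : ∃ ε > 0, ∀ y : ℝ, x ≤ y → y < x + ε → y ∉ halfOmegaL := by
    rcases lt_or_ge x 0 with h0 | h0
    · exact ⟨-x, by linarith, fun y hy1 hy2 hmem => absurd hmem.1.1 (by linarith)⟩
    rcases le_or_gt 1 x with h1 | h1
    · exact ⟨1, one_pos, fun y hy1 _ hmem => absurd hmem.1.2 (by linarith)⟩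
    obtain ⟨J, hJ1, hJD⟩ := exists_bad x hx h0 h1
    refine ⟨((⌊(2 : ℝ) ^ J * x⌋ : ℝ) + 1 - (2 : ℝ) ^ J * x) / 2 ^ J,
      div_pos (by linarith [Int.lt_floor_add_one ((2 : ℝ) ^ J * x)]) (by positivity), ?_⟩
    intro y hy1 hy2
    apply not_mem_of_floor_eq hJ1 hJD
    rw [Int.floor_eq_iff]
    constructor
    · calc ((⌊(2 : ℝ) ^ J * x⌋ : ℤ) : ℝ) ≤ 2 ^ J * x := Int.floor_le _
        _ ≤ 2 ^ J * y := by
          apply mul_le_mul_of_nonneg_left hy1 (by positivity)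
    · have : (2 : ℝ) ^ J * y
          < 2 ^ J * (x + ((⌊(2 : ℝ) ^ J * x⌋ : ℝ) + 1 - (2 : ℝ) ^ J * x) / 2 ^ J) :=
        mul_lt_mul_of_pos_left hy2 (by positivity)
      rw [mul_add, mul_div_cancel₀ _ (by positivity : ((2:ℝ)^J) ≠ 0)] at this
      push_cast
      linarith
  obtain ⟨εL, hεL, hL'⟩ := hL
  obtain ⟨εR, hεR, hR'⟩ := hR
  refine ⟨min εL εR, by positivity, ?_⟩
  intro y hy
  rw [Metric.mem_ball, Real.dist_eq, abs_lt] at hy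
  rw [Set.mem_compl_iff]
  rcases lt_or_ge y x with h | h
  · exact hL' y (by have := min_le_left εL εR; linarith [hy.1]) h
  · exact hR' y h (by have := min_le_right εL εR; linarith [hy.2])

lemma fineSet_isClosed (m k : ℕ) : IsClosed (fineSet m k) := by
  have heq : fineSet m k
      = (fun x : ℝ => (x - (k : ℝ) / 2 ^ (2 * m)) * 2 ^ (2 * m)) ⁻¹' halfOmegaL := by
    ext x
    simp only [fineSet, Set.mem_setOf_eq, Set.mem_preimage]
    constructor
    · rintro ⟨x', hx', rfl⟩
      have h : ((k : ℝ) / 2 ^ (2 * m) + x' / 2 ^ (2 * m) - (k : ℝ) / 2 ^ (2 * m)) * 2 ^ (2 * m)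
          = x' := by field_simp; ring
      rwa [h]
    · intro h
      exact ⟨_, h, by field_simp; ring⟩
  rw [heq]
  exact halfOmegaL_isClosed.preimage (by continuity)

lemma fineSet_props {m k : ℕ} (hbp : breakpoint m k) {x : ℝ} (hx : x ∈ fineSet m k) :
    (0 ≤ x ∧ x < 1) ∧ ⌊(2 : ℝ) ^ (2 * m) * x⌋ = (k : ℤ) ∧
      (∀ j : ℕ, 1 ≤ j → 0 ≤ defDigit x j) ∧
      (∀ j : ℕ, 2 * m < j → 0 < defDigit x j) := by
  obtain ⟨x', hx', hxe⟩ := hx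
  obtain ⟨⟨h0', h1'⟩, hD'⟩ := hx'
  have hxe2 : x = ((k : ℝ) + x') / 2 ^ (2 * m) := by rw [hxe, ← add_div]
  have hk1 : (k : ℝ) + 1 ≤ 2 ^ (2 * m) := by
    rcases hbp with ⟨hm, hk⟩ | ⟨_, _, hk, _, _⟩
    · subst hm; subst hk; norm_num
    · have : (k : ℝ) < 2 ^ (2 * m) := by exact_mod_cast hk
      have : ((k : ℕ) : ℝ) + 1 ≤ ((2 ^ (2 * m) : ℕ) : ℝ) := by exact_mod_cast hk
      push_cast at this ⊢
      linarith
  have hIco : 0 ≤ x ∧ x < 1 := by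
    constructor
    · rw [hxe2]; positivity
    · rw [hxe2, div_lt_one (by positivity)]
      linarith
  have hfl : ⌊(2 : ℝ) ^ (2 * m) * x⌋ = (k : ℤ) := by
    rw [hxe2]; exact floor_base m k x' h0' h1'
  have hD2m : defDigit x (2 * m) = 0 := by
    rcases hbp with ⟨hm, _⟩ | ⟨_, _, _, _, hB⟩
    · subst hm; exact defDigit_zero x
    · rw [hxe2, defDigit_low m k x' h0' h1' (le_refl _)]; exact hB
  have hHigh : ∀ j : ℕ, 2 * m < j → 0 < defDigit x j := by
    intro j hj
    have : j = 2 * m + (j - 2 * m) := by omega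
    rw [this, hxe2, defDigit_split m k x' (j - 2 * m), ← hxe2, hD2m, zero_add]
    exact hD' _ (by omega)
  refine ⟨hIco, hfl, ?_, hHigh⟩
  intro j hj
  rcases le_or_gt j (2 * m) with hle | hlt
  · rcases hbp with ⟨hm, hk⟩ | ⟨hm, _, _, hB, hB2⟩
    · omega
    · rcases eq_or_lt_of_le hle with heq | hlt2
      · rw [heq, hD2m]
      · rw [hxe2, defDigit_low m k x' h0' h1' hle]
        exact hB j hj (by omega)
  · exact le_of_lt (hHigh j hlt)

lemma backward {m k : ℕ} (hbp : breakpoint m k) {x : ℝ} (hx : x ∈ fineSet m k) :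
    x ∈ OmegaLfin := by
  obtain ⟨hIco, _, hnn, hHigh⟩ := fineSet_props hbp hx
  have hΩ : x ∈ OmegaL := ⟨Set.mem_Ico.mpr hIco, hnn⟩
  refine ⟨hΩ, ?_⟩
  intro hinf
  apply hinf.2
  apply Set.Finite.subset (Set.finite_Iic (2 * m))
  intro j hj
  rcases le_or_gt j (2 * m) with h | h
  · exact h
  · exact absurd hj.2 (by have := hHigh j h; omega)

lemma forward {x : ℝ} (hx : x ∈ OmegaLfin) :
    ∃ m k : ℕ, breakpoint m k ∧ x ∈ fineSet m k := by
  obtain ⟨hΩ, hninf⟩ := hx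
  obtain ⟨⟨hx0, hx1⟩, hnn⟩ := hΩ
  have hfin : {j : ℕ | 1 ≤ j ∧ defDigit x j = 0}.Finite := by
    rw [← Set.not_infinite]
    intro h
    exact hninf ⟨⟨Set.mem_Ico.mpr ⟨hx0, hx1⟩, hnn⟩, h⟩
  by_cases hne : {j : ℕ | 1 ≤ j ∧ defDigit x j = 0}.Nonempty
  · set J := hfin.toFinset.max' (Set.Finite.toFinset_nonempty hfin |>.mpr hne) with hJdef
    have hJmem : J ∈ {j : ℕ | 1 ≤ j ∧ defDigit x j = 0} := by
      have := hfin.toFinset.max'_mem (Set.Finite.toFinset_nonempty hfin |>.mpr hne)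
      rwa [Set.Finite.mem_toFinset] at this
    have hJmax : ∀ j, 1 ≤ j → defDigit x j = 0 → j ≤ J := by
      intro j h1 h2
      exact hfin.toFinset.le_max' j (by rw [Set.Finite.mem_toFinset]; exact ⟨h1, h2⟩)
    have hJeven : Even J := by
      rcases Int.even_coe_nat J |>.mp ⟨∑ i ∈ Finset.Icc 1 J, bdigit x i, by
        have := hJmem.2
        rw [defDigit] at this
        omega⟩ with h
      exact h
    obtain ⟨m, hm⟩ : ∃ m, J = 2 * m := by
      obtain ⟨r, hr⟩ := hJeven
      exact ⟨r, by omega⟩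
    have hm1 : 1 ≤ m := by
      have := hJmem.1
      omega
    set k0 : ℤ := ⌊(2 : ℝ) ^ (2 * m) * x⌋ with hk0
    have hk0nn : 0 ≤ k0 := Int.floor_nonneg.mpr (by positivity)
    set k : ℕ := k0.toNat with hkdef
    have hkcast : (k : ℝ) = (k0 : ℝ) := by
      rw [hkdef]
      exact_mod_cast congrArg (fun z : ℤ => (z : ℝ)) (Int.toNat_of_nonneg hk0nn)
    set x' : ℝ := Int.fract ((2 : ℝ) ^ (2 * m) * x) with hx'def
    have h0' : 0 ≤ x' := Int.fract_nonneg _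
    have h1' : x' < 1 := Int.fract_lt_one _
    have hxe : x = ((k : ℝ) + x') / 2 ^ (2 * m) := by
      rw [hkcast, hx'def, hk0, Int.floor_add_fract, eq_div_iff (by positivity)]
      ring
    have hflB : ⌊(2 : ℝ) ^ (2 * m) * x⌋ = (k : ℤ) := by
      rw [hxe]; exact floor_base m k x' h0' h1'
    have hD2m : defDigit x (2 * m) = 0 := by rw [← hm]; exact hJmem.2
    have hkpos : 0 < k := by
      rcases Nat.eq_zero_or_pos k with h0 | h
      · exfalso
        have hall : ∀ i ∈ Finset.Icc 1 (2 * m), bdigit x i = 0 := by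
          intro i hi
          rw [Finset.mem_Icc] at hi
          rw [bdigit_mod x hi.1 hi.2, hflB, h0]
          norm_num
        have : defDigit x (2 * m) = 2 * m := by
          rw [defDigit, Finset.sum_congr rfl hall, Finset.sum_const, smul_zero]
          push_cast; ring
        omega
      · exact h
    have hklt : k < 2 ^ (2 * m) := by
      have h1 : (2 : ℝ) ^ (2 * m) * x < 2 ^ (2 * m) := by
        nlinarith [pow_pos (show (0:ℝ) < 2 by norm_num) (2 * m)]
      have h2 : (k0 : ℝ) ≤ (2 : ℝ) ^ (2 * m) * x := Int.floor_le _
      have : (k : ℝ) < (2 : ℝ) ^ (2 * m) := by rw [hkcast]; linarith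
      exact_mod_cast this
    have hlow : ∀ j : ℕ, j ≤ 2 * m → defDigit ((k : ℝ) / 2 ^ (2 * m)) j = defDigit x j := by
      intro j hj
      rw [hxe, defDigit_low m k x' h0' h1' hj]
    refine ⟨m, k, Or.inr ⟨hm1, hkpos, hklt, ?_, ?_⟩, ?_⟩
    · intro j hj1 hj2
      rw [hlow j (by omega)]
      exact hnn j hj1
    · rw [hlow (2 * m) (le_refl _)]
      exact hD2m
    · refine ⟨x', ⟨Set.mem_Ico.mpr ⟨h0', h1'⟩, ?_⟩, by rw [hxe, ← add_div]⟩
      intro i hi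
      have hsplit : defDigit x (2 * m + i) = defDigit x (2 * m) + defDigit x' i := by
        conv_lhs => rw [hxe]
        rw [defDigit_split m k x' i, ← hxe]
      have hge : 0 ≤ defDigit x (2 * m + i) := hnn (2 * m + i) (by omega)
      have hne0 : defDigit x (2 * m + i) ≠ 0 := by
        intro h
        have := hJmax (2 * m + i) (by omega) h
        omega
      omega
  · refine ⟨0, 0, Or.inl ⟨rfl, rfl⟩, ?_⟩
    refine ⟨x, ⟨Set.mem_Ico.mpr ⟨hx0, hx1⟩, ?_⟩, by norm_num⟩
    intro j hj
    have h1 := hnn j hj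
    have h2 : defDigit x j ≠ 0 := by
      intro h
      exact hne ⟨j, hj, h⟩
    omega

end FPaux

/-- Fine partition of the deficient digit set:
`Ω^L_fin` is the disjoint union of the closed sets `Ω^L(B)`, `B ∈ ℬ'`. -/
theorem fine_partition_of_deficient_digit_set :
    (OmegaLfin = ⋃ (p : ℕ × ℕ) (_ : breakpoint p.1 p.2), fineSet p.1 p.2) ∧
      (∀ m k m' k' : ℕ, breakpoint m k → breakpoint m' k' → (m, k) ≠ (m', k') →
        Disjoint (fineSet m k) (fineSet m' k')) ∧
      (∀ m k : ℕ, breakpoint m k → IsClosed (fineSet m k)) := by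
  refine ⟨?_, ?_, fun m k _ => FPaux.fineSet_isClosed m k⟩
  · ext x
    simp only [Set.mem_iUnion]
    constructor
    · intro hx
      obtain ⟨m, k, hbp, hmem⟩ := FPaux.forward hx
      exact ⟨(m, k), hbp, hmem⟩
    · rintro ⟨⟨m, k⟩, hbp, hmem⟩
      exact FPaux.backward hbp hmem
  · intro m k m' k' hbp hbp' hne
    rw [Set.disjoint_left]
    intro x hx hx'
    obtain ⟨_, hfl, _, hHigh⟩ := FPaux.fineSet_props hbp hx
    obtain ⟨_, hfl', _, hHigh'⟩ := FPaux.fineSet_props hbp' hx'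
    have hD2m : 1 ≤ m → defDigit x (2 * m) = 0 := by
      intro hm
      rcases hbp with ⟨h0, _⟩ | ⟨_, _, _, _, hB⟩
      · omega
      · obtain ⟨x', hx'', hxe⟩ := hx
        rw [hxe, ← add_div, FPaux.defDigit_low m k x' hx''.1.1 hx''.1.2 (le_refl _)]
        exact hB
    have hD2m' : 1 ≤ m' → defDigit x (2 * m') = 0 := by
      intro hm
      rcases hbp' with ⟨h0, _⟩ | ⟨_, _, _, _, hB⟩
      · omega
      · obtain ⟨x', hx'', hxe⟩ := hx'
        rw [hxe, ← add_div, FPaux.defDigit_low m' k' x' hx''.1.1 hx''.1.2 (le_refl _)]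
        exact hB
    have hmm : m = m' := by
      rcases lt_trichotomy m m' with h | h | h
      · have h1 := hHigh (2 * m') (by omega)
        have h2 := hD2m' (by omega)
        omega
      · exact h
      · have h1 := hHigh' (2 * m) (by omega)
        have h2 := hD2m (by omega)
        omega
    have hkk : k = k' := by
      subst hmm
      rw [hfl] at hfl'
      exact_mod_cast hfl'
    exact hne (by rw [hmm, hkk])
end
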